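/- arXiv:2209.00424 — 9 statements merged into one kernel-verified Lean document; each statement's English description precedes it below -/
import Mathlib

section
/- If a linear order of the vertices of a graph contains three edges (a,a'), (b,b'), (c,c') with a ≺ b ≺ c ≺ b' and b' ≺ a' and b' ≺ c', then the graph does not admit a 1-page rique layout under that order: the edge (b,b') can be removed neither at the head nor at the tail of the rique at time b'. -/
variable {V : Type*}

/-- Feasibility of processing all edges of `G` by a rique in the linear order `f`:
every edge `(b,b')` can be removed at time `b'` either at the head or at the tail. -/
def RiqueFeasible (G : SimpleGraph V) (f : V → ℕ) : Prop :=
  ∀ b b', G.Adj b b' → f b < f b' →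
    (∀ c c', G.Adj c c' → ¬ (f b < f c ∧ f c < f b' ∧ f b' < f c')) ∨
    (∀ a a', G.Adj a a' → ¬ (f a < f b ∧ f b' < f a'))

/-- If a linear order contains three edges `(a,a')`, `(b,b')`, `(c,c')` with
`a ≺ b ≺ c ≺ b'`, `b' ≺ a'` and `b' ≺ c'`, then the edge `(b,b')` can be removed
neither at the head nor at the tail of the rique at time `b'`, and hence the graph
admits no 1-page rique layout under that order. -/
theorem pattern_blocks_rique (G : SimpleGraph V) (f : V → ℕ)
    (a a' b b' c c' : V)
    (ha : G.Adj a a') (hb : G.Adj b b') (hc : G.Adj c c')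
    (h1 : f a < f b) (h2 : f b < f c) (h3 : f c < f b')
    (h4 : f b' < f a') (h5 : f b' < f c') :
    (¬ ∀ u u', G.Adj u u' → ¬ (f b < f u ∧ f u < f b' ∧ f b' < f u')) ∧
    (¬ ∀ u u', G.Adj u u' → ¬ (f u < f b ∧ f b' < f u')) ∧
    ¬ RiqueFeasible G f := by
  refine ⟨fun h => h c c' hc ⟨h2, h3, h5⟩, fun h => h a a' ha ⟨h1, h4⟩, fun h => ?_⟩
  rcases h b b' hb (h2.trans h3) with h' | h'
  · exact h' c c' hc ⟨h2, h3, h5⟩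
  · exact h' a a' ha ⟨h1, h4⟩
end

section
/- The complete graph K_4 has rique-number 1, but admits neither a 1-page stack layout nor a 1-page queue layout. -/
variable {V : Type*}

/-- The order `f` avoids the rique forbidden pattern P.1. -/
def RiqueFree (G : SimpleGraph V) (f : V → ℕ) : Prop :=
  ∀ a a' b b' c c', G.Adj a a' → G.Adj b b' → G.Adj c c' →
    ¬ (f a < f b ∧ f b < f c ∧ f c < f b' ∧ f b' < f a' ∧ f b' < f c')

/-- `G` has rique-number 1. -/
def HasOnePageRique (G : SimpleGraph V) : Prop :=
  ∃ f : V → ℕ, Function.Injective f ∧ RiqueFree G f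

/-- A 1-page stack layout: no two edges cross. -/
def StackFree (G : SimpleGraph V) (f : V → ℕ) : Prop :=
  ∀ a b c d, G.Adj a b → G.Adj c d → ¬ (f a < f c ∧ f c < f b ∧ f b < f d)

/-- A 1-page queue layout: no two edges nest. -/
def QueueFree (G : SimpleGraph V) (f : V → ℕ) : Prop :=
  ∀ a b c d, G.Adj a b → G.Adj c d → ¬ (f a < f c ∧ f c < f d ∧ f d < f b)

/-! A rique pattern occupies five distinct positions of the order, so it cannot occur on four
vertices. Sorting the vertices of a `K_4` as `v₀ ≺ v₁ ≺ v₂ ≺ v₃`, the edges `v₀v₂` and `v₁v₃`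
cross, while `v₀v₃` and `v₁v₂` nest. -/

open Function SimpleGraph

theorem Tuple.strictMono_sort {β : Type*} [LinearOrder β] {n : ℕ} {g : Fin n → β}
    (hg : Injective g) : StrictMono (g ∘ Tuple.sort g) :=
  (Tuple.monotone_sort g).strictMono_of_injective (hg.comp (Tuple.sort g).injective)

theorem exists_hom_completeGraph_strictMono {β : Type*} [LinearOrder β] {G : SimpleGraph V}
    {f : V → β} (hf : Injective f) {n : ℕ} (φ : completeGraph (Fin n) →g G) :
    ∃ ψ : completeGraph (Fin n) →g G, StrictMono (f ∘ ψ) :=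
  ⟨φ.comp (Iso.completeGraph (Tuple.sort (f ∘ φ))).toHom,
    Tuple.strictMono_sort (hf.comp (Hom.injective_of_top_hom φ))⟩

theorem riqueFree_of_card_lt_five [Fintype V] (hV : Fintype.card V < 5) (G : SimpleGraph V)
    (f : V → ℕ) : RiqueFree G f := by
  rintro a a' b b' c c' - - - ⟨hab, hbc, hcb', hb'a', -⟩
  have hmono : StrictMono (f ∘ ![a, b, c, b', a']) := by
    refine Fin.strictMono_iff_lt_succ.2 fun i => ?_
    fin_cases i <;> assumption
  have := Fintype.card_le_of_injective _ hmono.injective.of_comp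
  simp only [Fintype.card_fin] at this
  omega

theorem hasOnePageRique_of_card_lt_five [Fintype V] (hV : Fintype.card V < 5)
    (G : SimpleGraph V) : HasOnePageRique G :=
  ⟨Fin.val ∘ Fintype.equivFin V, Fin.val_injective.comp (Fintype.equivFin V).injective,
    riqueFree_of_card_lt_five hV G _⟩

theorem not_stackFree_of_hom_completeGraph {G : SimpleGraph V} {f : V → ℕ} (hf : Injective f)
    (φ : completeGraph (Fin 4) →g G) : ¬ StackFree G f := by
  obtain ⟨ψ, hψ⟩ := exists_hom_completeGraph_strictMono hf φ
  intro h
  exact h (ψ 0) (ψ 2) (ψ 1) (ψ 3) (ψ.map_adj (by decide)) (ψ.map_adj (by decide))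
    ⟨hψ (by decide), hψ (by decide), hψ (by decide)⟩

theorem not_queueFree_of_hom_completeGraph {G : SimpleGraph V} {f : V → ℕ} (hf : Injective f)
    (φ : completeGraph (Fin 4) →g G) : ¬ QueueFree G f := by
  obtain ⟨ψ, hψ⟩ := exists_hom_completeGraph_strictMono hf φ
  intro h
  exact h (ψ 0) (ψ 3) (ψ 1) (ψ 2) (ψ.map_adj (by decide)) (ψ.map_adj (by decide))
    ⟨hψ (by decide), hψ (by decide), hψ (by decide)⟩

/-- `K_4` has rique-number 1, but admits neither a 1-page stack layout nor a
1-page queue layout. -/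
theorem K4_rique_not_stack_not_queue :
    HasOnePageRique (SimpleGraph.completeGraph (Fin 4)) ∧
    ¬ (∃ f : Fin 4 → ℕ, Function.Injective f ∧ StackFree (SimpleGraph.completeGraph (Fin 4)) f) ∧
    ¬ (∃ f : Fin 4 → ℕ, Function.Injective f ∧ QueueFree (SimpleGraph.completeGraph (Fin 4)) f) :=
  ⟨hasOnePageRique_of_card_lt_five (by simp) _,
    fun ⟨_, hf, h⟩ => not_stackFree_of_hom_completeGraph hf .id h,
    fun ⟨_, hf, h⟩ => not_queueFree_of_hom_completeGraph hf .id h⟩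
end

section
/- A graph admitting a 1-page rique layout is planar. -/
variable {V : Type*}

/-- `G` is planar: its vertices can be mapped injectively to the plane and its
edges drawn as simple arcs meeting only at common endpoints. -/
def IsPlanar (G : SimpleGraph V) : Prop :=
  ∃ (p : V → ℝ × ℝ) (γ : ∀ u v : V, G.Adj u v → Path (p u) (p v)),
    Function.Injective p ∧
    (∀ u v (h : G.Adj u v), Function.Injective (γ u v h)) ∧
    (∀ u v (h : G.Adj u v) (w : V), p w ∈ Set.range (γ u v h) → w = u ∨ w = v) ∧
    (∀ u v u' v' (h : G.Adj u v) (h' : G.Adj u' v'), s(u, v) ≠ s(u', v') →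
      Set.range (γ u v h) ∩ Set.range (γ u' v' h') ⊆
        ({p u, p v} : Set (ℝ × ℝ)) ∩ {p u', p v'})

/-!
Put the vertices on the horizontal axis in layout order. An edge `a < b` that is covered, i.e. lies
strictly inside another edge, is drawn as the lower half-circle over `[a, b]`. Every other edge
follows a lower half-circle from `a` leftwards to a turning point of its own, left of all vertices,
and then an upper half-circle from there to `b`. Half-circles with distinct diameters on the axis
meet off the axis only if they are on the same side and their diameters interleave. Ordering the
turning points reversely to the lexicographic order of `(b, a)` nests all upper half-circles, and
the lower ones of uncovered edges could only interleave if one of these edges were covered.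
Finally, the forbidden pattern says that no edge starts inside a covered edge and ends to its
right, while one ending no further right is covered itself; so the half-circle of a covered edge
interleaves with no other lower half-circle.
-/

open Set Function

def Interleaved {α : Type*} [LT α] (a b c d : α) : Prop := a < c ∧ c < b ∧ b < d

lemma Path.injective_symm {X : Type*} [TopologicalSpace X] {x y : X} {γ : Path x y}
    (hγ : Injective γ) : Injective γ.symm :=
  hγ.comp unitInterval.symm_bijective.injective

lemma Path.injective_trans {X : Type*} [TopologicalSpace X] {x y z : X} {γ : Path x y}
    {γ' : Path y z} (hγ : Injective γ) (hγ' : Injective γ')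
    (h : range γ ∩ range γ' ⊆ {y}) :
    Injective (γ.trans γ') := by
  have first_ne_second : ∀ {s t : unitInterval} (hs ht), ¬ (t : ℝ) ≤ 1 / 2 →
      γ ⟨2 * s, hs⟩ ≠ γ' ⟨2 * t - 1, ht⟩ := by
    intro s t hs ht hgt heq
    have hy : γ' ⟨2 * t - 1, ht⟩ = y := h ⟨⟨_, heq⟩, ⟨_, rfl⟩⟩
    have := congrArg Subtype.val (hγ' (hy.trans γ'.source.symm))
    simp only [Set.Icc.coe_zero] at this
    exact hgt (by linarith)
  intro s t hst
  rw [trans_apply, trans_apply] at hst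
  split_ifs at hst with hs ht ht
  · have := congrArg Subtype.val (hγ hst)
    exact Subtype.ext (by simp only at this; linarith)
  · exact (first_ne_second _ _ ht hst).elim
  · exact (first_ne_second _ _ hs hst.symm).elim
  · have := congrArg Subtype.val (hγ' hst)
    exact Subtype.ext (by simp only at this; linarith)

/-- The closed half-circle with diameter `[a, b]` on the horizontal axis, in the upper half-plane
if `0 < s` and in the lower one if `s < 0`. -/
def semicircle (a b s : ℝ) : Set (ℝ × ℝ) :=
  {q | q.2 ^ 2 = (q.1 - a) * (b - q.1) ∧ 0 ≤ s * q.2}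

lemma fst_eq_or_eq_of_mem_semicircle {a b s : ℝ} {q : ℝ × ℝ} (hq : q ∈ semicircle a b s)
    (h0 : q.2 = 0) : q.1 = a ∨ q.1 = b := by
  have : (q.1 - a) * (b - q.1) = 0 := by rw [← hq.1, h0]; ring
  rcases mul_eq_zero.mp this with h | h
  · exact .inl (by linarith)
  · exact .inr (by linarith)

lemma snd_eq_zero_of_mem_semicircle_neg {a b a' b' s : ℝ} (hs : s ≠ 0) {q : ℝ × ℝ}
    (hq : q ∈ semicircle a b s) (hq' : q ∈ semicircle a' b' (-s)) : q.2 = 0 := by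
  have : s * q.2 = 0 := le_antisymm (by linarith [hq'.2]) hq.2
  exact (mul_eq_zero.mp this).resolve_left hs

/-- Circles centred on the axis over distinct, non-interleaved diameters are nested or disjoint
(possibly tangent), so they can only meet on the axis. -/
lemma snd_eq_zero_of_mem_semicircle_of_not_interleaved {a b a' b' s s' : ℝ}
    (hab : a < b) (hab' : a' < b') (h : ¬Interleaved a b a' b') (h' : ¬Interleaved a' b' a b)
    (hne : (a, b) ≠ (a', b')) {q : ℝ × ℝ}
    (hq : q ∈ semicircle a b s) (hq' : q ∈ semicircle a' b' s') : q.2 = 0 := by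
  obtain ⟨x, y⟩ := q
  obtain ⟨e, -⟩ := hq
  obtain ⟨e', -⟩ := hq'
  dsimp only at e e' ⊢
  suffices hP : (x - a) * (b - x) ≤ 0 from pow_eq_zero_iff two_ne_zero |>.mp (by nlinarith)
  by_contra! hP
  have hx : a < x ∧ x < b := by constructor <;> nlinarith
  have hx' : a' < x ∧ x < b' := by constructor <;> nlinarith
  have key : (x - a) * (b - b') + (a' - a) * (b' - x) = 0 := by linear_combination e' - e
  unfold Interleaved at h h'
  simp only [ne_eq, Prod.mk.injEq] at hne
  rcases lt_trichotomy a a' with ha | rfl | ha <;> rcases lt_trichotomy b b' with hb | rfl | hb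
  all_goals first
    | exact hne ⟨rfl, rfl⟩
    | exact h ⟨by assumption, by linarith, by assumption⟩
    | exact h' ⟨by assumption, by linarith, by assumption⟩
    | nlinarith

noncomputable def semicircleArc (a b s : ℝ) : Path ((a, 0) : ℝ × ℝ) (b, 0) where
  toFun t := (a + (b - a) * t, s * √((b - a) * t * ((b - a) * (1 - t))))
  source' := by simp
  target' := by simp

lemma semicircleArc_injective {a b : ℝ} (hab : a ≠ b) (s : ℝ) :
    Injective (semicircleArc a b s) := by
  intro t t' h
  have := congrArg Prod.fst h
  simp [semicircleArc, sub_ne_zero.mpr hab.symm] at this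
  exact Subtype.ext this

lemma range_semicircleArc_subset {a b s : ℝ} (hab : a ≤ b) (hs : s ^ 2 = 1) :
    range (semicircleArc a b s) ⊆ semicircle a b s := by
  rintro _ ⟨t, rfl⟩
  have hz : 0 ≤ (b - a) * t * ((b - a) * (1 - t)) := by
    have := t.2.1; have := t.2.2
    apply mul_nonneg <;> apply mul_nonneg <;> linarith
  constructor
  · show (s * √_) ^ 2 = (a + (b - a) * t - a) * (b - (a + (b - a) * t))
    rw [mul_pow, hs, Real.sq_sqrt hz]
    ring
  · show 0 ≤ s * (s * √_)
    rw [← mul_assoc, ← sq, hs, one_mul]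
    positivity

lemma isPlanar_of_orientedDrawing {α : Type*} [LinearOrder α] (G : SimpleGraph V) {f : V → α}
    (hf : Injective f) {p : V → ℝ × ℝ} (hp : Injective p) (δ : ∀ u v, Path (p u) (p v))
    (hinj : ∀ u v, G.Adj u v → f u < f v → Injective (δ u v))
    (hvert : ∀ u v w, G.Adj u v → f u < f v → p w ∈ range (δ u v) → w = u ∨ w = v)
    (hinter : ∀ u v u' v', G.Adj u v → G.Adj u' v' → f u < f v → f u' < f v' →
      (u, v) ≠ (u', v') → range (δ u v) ∩ range (δ u' v') ⊆ {p u, p v} ∩ {p u', p v'}) :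
    IsPlanar G := by
  classical
  have orient : ∀ u v, G.Adj u v → f u < f v ∨ f v < f u := fun u v h =>
    lt_or_gt_of_ne (hf.ne h.ne)
  let γ u v : Path (p u) (p v) := if f u < f v then δ u v else (δ v u).symm
  have oriented : ∀ u v, G.Adj u v → ∃ x y, G.Adj x y ∧ f x < f y ∧ s(x, y) = s(u, v) ∧
      range (γ u v) = range (δ x y) := by
    intro u v h
    by_cases huv : f u < f v
    · exact ⟨u, v, h, huv, rfl, by simp only [γ, if_pos huv]⟩
    · exact ⟨v, u, h.symm, (orient u v h).resolve_left huv, Sym2.eq_swap,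
        by simp only [γ, if_neg huv, Path.symm_range]⟩
  have pair_eq : ∀ {x y u v : V}, s(x, y) = s(u, v) →
      ({p x, p y} : Set (ℝ × ℝ)) = {p u, p v} := by
    intro x y u v hs
    rcases Sym2.eq_iff.mp hs with ⟨rfl, rfl⟩ | ⟨rfl, rfl⟩
    · rfl
    · exact pair_comm _ _
  refine ⟨p, fun u v _ => γ u v, hp, ?_, ?_, ?_⟩
  · intro u v h
    by_cases huv : f u < f v
    · simpa only [γ, if_pos huv] using hinj u v h huv
    · simp only [γ, if_neg huv]
      exact Path.injective_symm (hinj v u h.symm ((orient u v h).resolve_left huv))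
  · intro u v h w hw
    obtain ⟨x, y, hxy, hlt, hs, hr⟩ := oriented u v h
    rw [hr] at hw
    simpa [← Sym2.mem_iff, ← hs] using hvert x y w hxy hlt hw
  · intro u v u' v' h h' hne
    obtain ⟨x, y, hxy, hlt, hs, hr⟩ := oriented u v h
    obtain ⟨x', y', hxy', hlt', hs', hr'⟩ := oriented u' v' h'
    rw [hr, hr', ← pair_eq hs, ← pair_eq hs']
    refine hinter x y x' y' hxy hxy' hlt hlt' fun heq => hne ?_
    obtain ⟨rfl, rfl⟩ := Prod.mk.inj heq
    rw [← hs, ← hs']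

namespace RiqueLayout

def IsCovered (G : SimpleGraph V) (f : V → ℕ) (a b : ℕ) : Prop :=
  ∃ x y, G.Adj x y ∧ f x < a ∧ b < f y

/-- The turning point of an uncovered edge `a < b`, left of all vertices. On pairs `a < b`,
`b * b + a` is strictly monotone for the lexicographic order of `(b, a)`. -/
def detour (a b : ℕ) : ℝ := -((b * b + a + 1 : ℕ) : ℝ)

lemma detour_lt_natCast (a b n : ℕ) : detour a b < n := by
  unfold detour
  have : (0 : ℝ) ≤ n := n.cast_nonneg
  have : (0 : ℝ) < (b * b + a + 1 : ℕ) := by positivity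
  linarith

lemma lt_or_eq_and_lt_of_detour_lt {a b a' b' : ℕ} (hab : a < b)
    (h : detour a b < detour a' b') : b' < b ∨ b' = b ∧ a' < a := by
  have h : b' * b' + a' < b * b + a := by
    unfold detour at h
    have := neg_lt_neg_iff.mp h
    norm_cast at this
    omega
  rcases lt_trichotomy b' b with hb | rfl | hb
  · exact .inl hb
  · exact .inr ⟨rfl, by omega⟩
  · nlinarith

lemma detour_ne {a b a' b' : ℕ} (hab : a < b) (hab' : a' < b') (hne : (a, b) ≠ (a', b')) :
    detour a b ≠ detour a' b' := by
  intro h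
  have h : b * b + a = b' * b' + a' := by
    unfold detour at h
    norm_cast at h
    omega
  rcases lt_trichotomy b' b with hb | rfl | hb
  · nlinarith
  · exact hne (by rw [show a = a' by omega])
  · nlinarith

lemma not_interleaved_detour_right {a b a' b' : ℕ} (hab : a < b) :
    ¬Interleaved (detour a b) (b : ℝ) (detour a' b') b' := by
  rintro ⟨h, -, hb⟩
  have hb : b < b' := by exact_mod_cast hb
  rcases lt_or_eq_and_lt_of_detour_lt hab h with h | ⟨rfl, -⟩ <;> omega

lemma not_interleaved_detour_left {a b a' b' : ℕ} (hab : a < b) (hnest : ¬(a < a' ∧ b' < b)) :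
    ¬Interleaved (detour a b) (a : ℝ) (detour a' b') a' := by
  rintro ⟨h, -, ha⟩
  have ha : a < a' := by exact_mod_cast ha
  rcases lt_or_eq_and_lt_of_detour_lt hab h with h | ⟨-, h⟩
  · exact hnest ⟨ha, h⟩
  · omega

variable {G : SimpleGraph V} {f : V → ℕ}

lemma not_interleaved_of_isCovered (hR : RiqueFree G f) {u v u' v' : V} (h : G.Adj u v)
    (h' : G.Adj u' v') (hc : IsCovered G f (f u) (f v)) :
    ¬Interleaved (f u) (f v) (f u') (f v') := by
  obtain ⟨x, y, hxy, hx, hy⟩ := hc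
  exact fun ⟨h₁, h₂, h₃⟩ => hR x y u v u' v' hxy h h' ⟨hx, h₁, h₂, hy, h₃⟩

lemma notMem_Ioo_of_isCovered (hR : RiqueFree G f) {u v u' v' : V} (h : G.Adj u v)
    (h' : G.Adj u' v') (hc : IsCovered G f (f u) (f v)) (hc' : ¬IsCovered G f (f u') (f v')) :
    f u' ∉ Ioo (f u) (f v) := by
  rintro ⟨h₁, h₂⟩
  obtain ⟨x, y, hxy, hx, hy⟩ := hc
  rcases lt_trichotomy (f v') (f v) with hv | hv | hv
  · exact hc' ⟨u, v, h, h₁, hv⟩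
  · exact hc' ⟨x, y, hxy, hx.trans h₁, hv ▸ hy⟩
  · exact hR x y u v u' v' hxy h h' ⟨hx, h₁, h₂, hy, hv⟩

open scoped Classical in
def edgeCurve (G : SimpleGraph V) (f : V → ℕ) (a b : ℕ) : Set (ℝ × ℝ) :=
  if IsCovered G f a b then semicircle a b (-1)
  else semicircle (detour a b) a (-1) ∪ semicircle (detour a b) b 1

open scoped Classical in
noncomputable def edgePath (G : SimpleGraph V) (f : V → ℕ) (a b : ℕ) :
    Path (((a : ℝ), 0) : ℝ × ℝ) ((b : ℝ), 0) :=
  if IsCovered G f a b then semicircleArc a b (-1)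
  else (semicircleArc (detour a b) a (-1)).symm.trans (semicircleArc (detour a b) b 1)

lemma range_edgePath_subset {a b : ℕ} (hab : a < b) :
    range (edgePath G f a b) ⊆ edgeCurve G f a b := by
  unfold edgePath edgeCurve
  split_ifs
  · exact range_semicircleArc_subset (by exact_mod_cast hab.le) (by norm_num)
  · rw [Path.trans_range, Path.symm_range]
    exact union_subset_union
      (range_semicircleArc_subset (detour_lt_natCast a b a).le (by norm_num))
      (range_semicircleArc_subset (detour_lt_natCast a b b).le (by norm_num))

lemma fst_eq_of_mem_edgeCurve {a b : ℕ} {q : ℝ × ℝ} (hq : q ∈ edgeCurve G f a b)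
    (h0 : q.2 = 0) : q.1 = detour a b ∨ q.1 = a ∨ q.1 = b := by
  unfold edgeCurve at hq
  split_ifs at hq
  · exact .inr (fst_eq_or_eq_of_mem_semicircle hq h0)
  · rcases hq with hq | hq <;> rcases fst_eq_or_eq_of_mem_semicircle hq h0 with h | h <;>
      simp [h]

lemma eq_or_eq_of_mem_edgeCurve {a b n : ℕ} (hn : ((n : ℝ), (0 : ℝ)) ∈ edgeCurve G f a b) :
    n = a ∨ n = b := by
  rcases fst_eq_of_mem_edgeCurve hn rfl with h | h | h <;> dsimp only at h
  · exact absurd h (detour_lt_natCast a b n).ne'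
  · exact .inl (by exact_mod_cast h)
  · exact .inr (by exact_mod_cast h)

lemma edgePath_injective {a b : ℕ} (hab : a < b) : Injective (edgePath G f a b) := by
  have hab' : (a : ℝ) < b := by exact_mod_cast hab
  unfold edgePath
  split_ifs
  · exact semicircleArc_injective hab'.ne _
  · refine Path.injective_trans
      (Path.injective_symm (semicircleArc_injective (detour_lt_natCast a b a).ne _))
      (semicircleArc_injective (detour_lt_natCast a b b).ne _) ?_
    rintro q ⟨hq, hq'⟩
    rw [Path.symm_range] at hq
    have hq := range_semicircleArc_subset (detour_lt_natCast a b a).le (by norm_num) hq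
    have hq' := range_semicircleArc_subset (detour_lt_natCast a b b).le (by norm_num) hq'
    have h0 := snd_eq_zero_of_mem_semicircle_neg one_ne_zero hq' hq
    rcases fst_eq_or_eq_of_mem_semicircle hq h0 with h | h
    · exact Prod.ext h h0
    · rcases fst_eq_or_eq_of_mem_semicircle hq' h0 with h' | h'
      · exact absurd (h.symm.trans h') (detour_lt_natCast a b a).ne'
      · exact absurd (h.symm.trans h') hab'.ne

lemma snd_eq_zero_of_isCovered_of_not_isCovered (hR : RiqueFree G f) {u v u' v' : V}
    (h : G.Adj u v) (h' : G.Adj u' v') (hlt : f u < f v) (hc : IsCovered G f (f u) (f v))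
    (hc' : ¬IsCovered G f (f u') (f v')) {q : ℝ × ℝ} (hq : q ∈ edgeCurve G f (f u) (f v))
    (hq' : q ∈ edgeCurve G f (f u') (f v')) : q.2 = 0 := by
  rw [edgeCurve, if_pos hc] at hq
  rw [edgeCurve, if_neg hc'] at hq'
  rcases hq' with hq' | hq'
  · refine snd_eq_zero_of_mem_semicircle_of_not_interleaved (by exact_mod_cast hlt)
      (detour_lt_natCast _ _ _) ?_ ?_ ?_ hq hq'
    · exact fun ⟨h₁, _⟩ => (detour_lt_natCast _ _ _).not_gt h₁
    · exact fun ⟨_, h₂, h₃⟩ => notMem_Ioo_of_isCovered hR h h' hc hc'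
        ⟨by exact_mod_cast h₂, by exact_mod_cast h₃⟩
    · exact fun heq => (detour_lt_natCast _ _ (f u)).ne' (Prod.mk.inj heq).1
  · exact snd_eq_zero_of_mem_semicircle_neg one_ne_zero hq' hq

lemma snd_eq_zero_of_not_isCovered {u v u' v' : V} (h : G.Adj u v) (h' : G.Adj u' v')
    (hlt : f u < f v) (hlt' : f u' < f v') (hc : ¬IsCovered G f (f u) (f v))
    (hc' : ¬IsCovered G f (f u') (f v')) (hne : (f u, f v) ≠ (f u', f v')) {q : ℝ × ℝ}
    (hq : q ∈ edgeCurve G f (f u) (f v)) (hq' : q ∈ edgeCurve G f (f u') (f v')) : q.2 = 0 := by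
  rw [edgeCurve, if_neg hc] at hq
  rw [edgeCurve, if_neg hc'] at hq'
  have hd := detour_ne hlt hlt' hne
  rcases hq with hq | hq <;> rcases hq' with hq' | hq'
  · exact snd_eq_zero_of_mem_semicircle_of_not_interleaved (detour_lt_natCast _ _ _)
      (detour_lt_natCast _ _ _)
      (not_interleaved_detour_left hlt fun ⟨h₁, h₂⟩ => hc' ⟨u, v, h, h₁, h₂⟩)
      (not_interleaved_detour_left hlt' fun ⟨h₁, h₂⟩ => hc ⟨u', v', h', h₁, h₂⟩)
      (fun heq => hd (Prod.mk.inj heq).1) hq hq'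
  · exact snd_eq_zero_of_mem_semicircle_neg one_ne_zero hq' hq
  · exact snd_eq_zero_of_mem_semicircle_neg one_ne_zero hq hq'
  · exact snd_eq_zero_of_mem_semicircle_of_not_interleaved (detour_lt_natCast _ _ _)
      (detour_lt_natCast _ _ _) (not_interleaved_detour_right hlt)
      (not_interleaved_detour_right hlt') (fun heq => hd (Prod.mk.inj heq).1) hq hq'

lemma snd_eq_zero_of_mem_edgeCurve_inter (hR : RiqueFree G f) {u v u' v' : V} (h : G.Adj u v)
    (h' : G.Adj u' v') (hlt : f u < f v) (hlt' : f u' < f v') (hne : (f u, f v) ≠ (f u', f v'))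
    {q : ℝ × ℝ} (hq : q ∈ edgeCurve G f (f u) (f v))
    (hq' : q ∈ edgeCurve G f (f u') (f v')) : q.2 = 0 := by
  by_cases hc : IsCovered G f (f u) (f v) <;> by_cases hc' : IsCovered G f (f u') (f v')
  · rw [edgeCurve, if_pos hc] at hq
    rw [edgeCurve, if_pos hc'] at hq'
    refine snd_eq_zero_of_mem_semicircle_of_not_interleaved (by exact_mod_cast hlt)
      (by exact_mod_cast hlt') ?_ ?_ ?_ hq hq'
    · simpa only [Interleaved, Nat.cast_lt] using not_interleaved_of_isCovered hR h h' hc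
    · simpa only [Interleaved, Nat.cast_lt] using not_interleaved_of_isCovered hR h' h hc'
    · simpa only [ne_eq, Prod.mk.injEq, Nat.cast_inj] using hne
  · exact snd_eq_zero_of_isCovered_of_not_isCovered hR h h' hlt hc hc' hq hq'
  · exact snd_eq_zero_of_isCovered_of_not_isCovered hR h' h hlt' hc' hc hq' hq
  · exact snd_eq_zero_of_not_isCovered h h' hlt hlt' hc hc' hne hq hq'

lemma fst_ne_detour_of_mem_edgeCurve {a b a' b' : ℕ} (hd : detour a b ≠ detour a' b')
    {q : ℝ × ℝ} (hq : q ∈ edgeCurve G f a' b') (h0 : q.2 = 0) : q.1 ≠ detour a b := by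
  rcases fst_eq_of_mem_edgeCurve hq h0 with h | h | h <;> rw [h]
  · exact hd.symm
  · exact (detour_lt_natCast a b a').ne'
  · exact (detour_lt_natCast a b b').ne'

lemma mem_pair_of_mem_edgeCurve_inter (hR : RiqueFree G f) {u v u' v' : V} (h : G.Adj u v)
    (h' : G.Adj u' v') (hlt : f u < f v) (hlt' : f u' < f v') (hne : (f u, f v) ≠ (f u', f v'))
    {q : ℝ × ℝ} (hq : q ∈ edgeCurve G f (f u) (f v) ∩ edgeCurve G f (f u') (f v')) :
    q ∈ ({((f u : ℝ), 0), ((f v : ℝ), 0)} : Set (ℝ × ℝ)) ∩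
      {((f u' : ℝ), 0), ((f v' : ℝ), 0)} := by
  have h0 := snd_eq_zero_of_mem_edgeCurve_inter hR h h' hlt hlt' hne hq.1 hq.2
  have hd := detour_ne hlt hlt' hne
  have h₁ := (fst_eq_of_mem_edgeCurve hq.1 h0).resolve_left
    (fst_ne_detour_of_mem_edgeCurve hd hq.2 h0)
  have h₂ := (fst_eq_of_mem_edgeCurve hq.2 h0).resolve_left
    (fst_ne_detour_of_mem_edgeCurve hd.symm hq.1 h0)
  obtain ⟨x, y⟩ := q
  dsimp only at h0 h₁ h₂
  subst h0
  constructor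
  · rcases h₁ with rfl | rfl <;> simp
  · rcases h₂ with rfl | rfl <;> simp

end RiqueLayout

/-- A graph admitting a 1-page rique layout is planar. -/
theorem onePageRique_planar (G : SimpleGraph V) (h : HasOnePageRique G) :
    IsPlanar G := by
  obtain ⟨f, hf, hR⟩ := h
  refine isPlanar_of_orientedDrawing G hf (p := fun v => ((f v : ℝ), 0))
    (fun u v hp => hf (Nat.cast_injective (congrArg Prod.fst hp)))
    (fun u v => RiqueLayout.edgePath G f (f u) (f v))
    (fun u v _ hlt => RiqueLayout.edgePath_injective hlt) ?_ ?_
  · intro u v w _ hlt hw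
    have hw := RiqueLayout.range_edgePath_subset hlt hw
    exact (RiqueLayout.eq_or_eq_of_mem_edgeCurve hw).imp (@hf _ _) (@hf _ _)
  · intro u v u' v' h h' hlt hlt' hne q hq
    exact RiqueLayout.mem_pair_of_mem_edgeCurve_inter hR h h' hlt hlt' ((hf.prodMap hf).ne hne)
      ⟨RiqueLayout.range_edgePath_subset hlt hq.1, RiqueLayout.range_edgePath_subset hlt' hq.2⟩
end

section
/- The complete graph K_6 does not have rique-number 1. -/
variable {V : Type*}

theorem not_riqueFree_of_strictMono {G : SimpleGraph V} {f : V → ℕ} {v : Fin 6 → V}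
    (hv : StrictMono (f ∘ v)) (h05 : G.Adj (v 0) (v 5)) (h13 : G.Adj (v 1) (v 3))
    (h24 : G.Adj (v 2) (v 4)) : ¬ RiqueFree G f := fun hfree =>
  hfree _ _ _ _ _ _ h05 h13 h24
    ⟨hv (by decide), hv (by decide), hv (by decide), hv (by decide), hv (by decide)⟩

theorem exists_equiv_strictMono_comp [Fintype V] {f : V → ℕ} (hf : Function.Injective f) :
    ∃ σ : Fin (Fintype.card V) ≃ V, StrictMono (f ∘ σ) := by
  let e := (Fintype.equivFin V).symm
  refine ⟨(Tuple.sort (f ∘ e)).trans e, ?_⟩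
  exact (Tuple.monotone_sort (f ∘ e)).strictMono_of_injective
    ((hf.comp e.injective).comp (Tuple.sort (f ∘ e)).injective)

theorem not_hasOnePageRique_completeGraph [Fintype V] (hV : 6 ≤ Fintype.card V) :
    ¬ HasOnePageRique (SimpleGraph.completeGraph V) := by
  rintro ⟨f, hf, hfree⟩
  obtain ⟨σ, hσ⟩ := exists_equiv_strictMono_comp hf
  let v : Fin 6 → V := σ ∘ Fin.castLE hV
  have hv : Function.Injective v := σ.injective.comp (Fin.castLE_injective hV)
  exact not_riqueFree_of_strictMono (v := v) (hσ.comp (Fin.strictMono_castLE hV))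
    (hv.ne (by decide)) (hv.ne (by decide)) (hv.ne (by decide)) hfree

/-- The complete graph `K_6` does not have rique-number 1. -/
theorem K6_not_one_page_rique : ¬ HasOnePageRique (SimpleGraph.completeGraph (Fin 6)) :=
  not_hasOnePageRique_completeGraph (by simp)
end

section
/- The rique-number of the complete graph K_n is at least (1 − 1/√2)(n − 2). -/
/-!
Place the vertices at positions `0, …, n - 1` in the order of the layout and read a page as a
set of pairs `(u, v)`, `u < v`, of positions. The rique pattern is an edge covered by one edge of
its page and crossed by another, so every edge of a page is uncovered or uncrossed.

Call `(u, v)` long if `u + 2 ≤ v`, and sweep the positions from left to right. On one page, the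
uncrossed edges at the current position `lo` and the edges they shelter form a noncrossing family,
which has fewer long edges than the positions it spans; the other edges at `lo` have distinct right
ends, and the longest of them covers, hence uncrosses, everything it spans. Over `k` pages, the page
holding the longest edge at `lo` pays for the whole column at `lo` and is then retired, which bounds
the long edges by `(2n - 4)k - k²`; with the `n - 1` short ones this is the density bound. For
`K_n`, the `n(n - 1)/2` edges then force `2(n - 2 - k)² ≤ (n - 2)²`.
-/

variable {V : Type*}

/-- A `k`-page rique layout of `G`: a linear vertex order and a (symmetric)
assignment of edges to `k` pages such that within each page the order avoids
the rique forbidden pattern P.1. -/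
def RiqueLayout (G : SimpleGraph V) (k : ℕ) : Prop :=
  ∃ (f : V → ℕ) (page : V → V → Fin k),
    Function.Injective f ∧ (∀ u v, page u v = page v u) ∧
    ∀ a a' b b' c c', G.Adj a a' → G.Adj b b' → G.Adj c c' →
      page a a' = page b b' → page b b' = page c c' →
      ¬ (f a < f b ∧ f b < f c ∧ f c < f b' ∧ f b' < f a' ∧ f b' < f c')

/-- The rique-number of `G`: the least number of pages of a rique layout of `G`. -/
noncomputable def riqueNumber (G : SimpleGraph V) : ℕ :=
  sInf {k | RiqueLayout G k}

open Finset

namespace Rique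

def Crossed (E : Finset (ℕ × ℕ)) (e : ℕ × ℕ) : Prop :=
  ∃ f ∈ E, e.1 < f.1 ∧ f.1 < e.2 ∧ e.2 < f.2

def Covered (E : Finset (ℕ × ℕ)) (e : ℕ × ℕ) : Prop :=
  ∃ f ∈ E, f.1 < e.1 ∧ e.2 < f.2

structure IsPage (E : Finset (ℕ × ℕ)) : Prop where
  lt : ∀ e ∈ E, e.1 < e.2
  not_crossed_of_covered : ∀ e ∈ E, Covered E e → ¬ Crossed E e

theorem Crossed.mono {E F : Finset (ℕ × ℕ)} {e : ℕ × ℕ} (h : Crossed E e) (hEF : E ⊆ F) :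
    Crossed F e :=
  let ⟨f, hf, hlt⟩ := h; ⟨f, hEF hf, hlt⟩

theorem card_le_card_sub_two_of_not_crossed (P : Finset ℕ) (S : Finset (ℕ × ℕ))
    (hP : ∀ e ∈ S, e.1 ∈ P ∧ e.2 ∈ P) (hlong : ∀ e ∈ S, ∃ x ∈ P, e.1 < x ∧ x < e.2)
    (hS : ∀ e ∈ S, ¬ Crossed S e) : #S ≤ #P - 2 := by
  induction P using Finset.strongInduction generalizing S with
  | H P ih =>
  rcases S.eq_empty_or_nonempty with rfl | hne
  · simp
  -- a shortest edge `e` has an interior point `x` that no edge of `S` ends at, and only `e`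
  -- loses its interior points when `x` is deleted
  obtain ⟨e, he, hmin⟩ := S.exists_min_image (fun e => e.2 - e.1) hne
  obtain ⟨x, hxP, hex, hxe⟩ := hlong e he
  have hcross : ∀ f ∈ S, ¬ (e.1 < f.1 ∧ f.1 < e.2 ∧ e.2 < f.2) ∧
      ¬ (f.1 < e.1 ∧ e.1 < f.2 ∧ f.2 < e.2) ∧ e.2 - e.1 ≤ f.2 - f.1 :=
    fun f hf => ⟨fun h => hS e he ⟨f, hf, h⟩, fun h => hS f hf ⟨e, he, h⟩, hmin f hf⟩
  have hIH := ih (P.erase x) (erase_ssubset hxP) (S.erase e)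
    (fun f hf => by
      obtain ⟨hfe, hf⟩ := mem_erase.1 hf
      have := hcross f hf
      exact ⟨mem_erase.2 ⟨by omega, (hP f hf).1⟩, mem_erase.2 ⟨by omega, (hP f hf).2⟩⟩)
    (fun f hf => by
      obtain ⟨hfe, hf⟩ := mem_erase.1 hf
      obtain ⟨y, hyP, hfy, hyf⟩ := hlong f hf
      by_cases hyx : y = x
      · have := hcross f hf
        have hne : f.1 ≠ e.1 ∨ f.2 ≠ e.2 := by
          by_contra! h; exact hfe (Prod.ext h.1 h.2)
        by_cases h1 : f.1 < e.1
        · exact ⟨e.1, mem_erase.2 ⟨by omega, (hP e he).1⟩, h1, by omega⟩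
        · exact ⟨e.2, mem_erase.2 ⟨by omega, (hP e he).2⟩, by omega, by omega⟩
      · exact ⟨y, mem_erase.2 ⟨hyx, hyP⟩, hfy, hyf⟩)
    (fun f hf hcr => hS f (mem_of_mem_erase hf) (hcr.mono (erase_subset e S)))
  have h3 : 3 ≤ #P := by
    have : ({e.1, x, e.2} : Finset ℕ) ⊆ P := by
      simp [insert_subset_iff, hxP, (hP e he).1, (hP e he).2]
    have hcard : #({e.1, x, e.2} : Finset ℕ) = 3 := by
      rw [card_insert_of_notMem (by simp; omega), card_pair (by omega)]
    exact hcard ▸ card_le_card this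
  rw [card_erase_of_mem he, card_erase_of_mem hxP] at hIH
  omega

theorem card_le_of_fst_eq {S : Finset (ℕ × ℕ)} {a s t : ℕ}
    (h : ∀ e ∈ S, e.1 = a ∧ s ≤ e.2 ∧ e.2 ≤ t) : #S ≤ t + 1 - s := by
  have hsub : S ⊆ {a} ×ˢ Icc s t := fun e he => by
    obtain ⟨h1, h2, h3⟩ := h e he
    exact mem_product.2 ⟨mem_singleton.2 h1, mem_Icc.2 ⟨h2, h3⟩⟩
  simpa using card_le_card hsub

theorem card_filter_lt_add_two_le {S : Finset (ℕ × ℕ)} {hi : ℕ}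
    (h : ∀ e ∈ S, e.1 < e.2 ∧ e.2 ≤ hi) : #(S.filter fun e => e.2 < e.1 + 2) ≤ hi := by
  have hT : ∀ e ∈ S.filter fun e => e.2 < e.1 + 2, e.1 < hi ∧ e.2 = e.1 + 1 := fun e he => by
    obtain ⟨heS, h2⟩ := mem_filter.1 he
    have := h e heS
    omega
  calc _ ≤ #(range hi) :=
        card_le_card_of_injOn Prod.fst (fun e he => mem_range.2 (hT e he).1)
          fun e he f hf hef => Prod.ext hef (by rw [(hT e he).2, (hT f hf).2, hef])
    _ = hi := card_range hi

theorem card_le_of_not_crossed {E S : Finset (ℕ × ℕ)} (hSE : S ⊆ E) {lo m : ℕ}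
    (hS : ∀ e ∈ S, lo ≤ e.1 ∧ e.2 ≤ m ∧ e.1 + 2 ≤ e.2 ∧ ¬ Crossed E e) : #S ≤ m - lo - 1 := by
  have := card_le_card_sub_two_of_not_crossed (Icc lo m) S
    (fun e he => by have := hS e he; simp only [mem_Icc]; omega)
    (fun e he => by
      have := hS e he
      exact ⟨e.1 + 1, mem_Icc.2 ⟨by omega, by omega⟩, by omega, by omega⟩)
    (fun e he hcr => (hS e he).2.2.2 (hcr.mono hSE))
  rw [Nat.card_Icc] at this
  omega

theorem IsPage.exists_card_long_add_le {E : Finset (ℕ × ℕ)} (hE : IsPage E) {hi : ℕ}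
    (hhi : ∀ e ∈ E, e.2 ≤ hi) {lo s : ℕ} (hlo : lo < s) (hs : s ≤ hi) (hlohi : lo + 2 ≤ hi)
    (hunc : ∀ e ∈ E, lo ≤ e.1 → e.2 < s → ¬ Crossed E e) :
    ∃ m s', lo < m ∧ m < s' ∧ s' ≤ hi ∧ (∀ e ∈ E, m ≤ e.1 → e.2 < s' → ¬ Crossed E e) ∧
      #(E.filter fun e => lo ≤ e.1 ∧ e.1 + 2 ≤ e.2) + lo + s ≤
        #(E.filter fun e => m ≤ e.1 ∧ e.1 + 2 ≤ e.2) + m + s' := by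
  -- `(lo, v)` is the longest uncrossed edge from `lo`: the edges it shelters are noncrossing,
  -- and the longest edge `(lo, t)` covers everything it spans beyond `m`
  set t := (E.filter (·.1 = lo)).sup Prod.snd
  set v := (E.filter fun e => e.1 = lo ∧ e.2 < s).sup Prod.snd
  set m := max (lo + 1) v
  have hv : v < s := (Finset.sup_lt_iff (by simp; omega)).2 fun e he => (mem_filter.1 he).2.2
  have ht : t ≤ hi := Finset.sup_le fun e he => hhi e (mem_filter.1 he).1
  have hinner : ∀ e ∈ E, lo < e.1 → e.1 < m → e.2 < s ∧ e.2 ≤ m := by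
    intro e he hle hm
    obtain ⟨g, hg, hgt⟩ := Finset.lt_sup_iff.1 (show e.1 < v by omega)
    obtain ⟨hgE, hg1, hg2⟩ := mem_filter.1 hg
    have : g.2 ≤ v := le_sup (f := Prod.snd) hg
    have : ¬ (g.1 < e.1 ∧ e.1 < g.2 ∧ g.2 < e.2) := fun h => hunc g hgE hg1.ge hg2 ⟨e, he, h⟩
    omega
  have hnear : #(E.filter fun e => lo ≤ e.1 ∧ e.1 < m ∧ e.1 + 2 ≤ e.2 ∧ e.2 < s) ≤ m - lo - 1 :=
    card_le_of_not_crossed (filter_subset _ _) fun e he => by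
      obtain ⟨he, h1, h2, h3, h4⟩ := mem_filter.1 he
      refine ⟨h1, ?_, h3, hunc e he h1 h4⟩
      rcases h1.lt_or_eq with h1 | h1
      · exact (hinner e he h1 h2).2
      · exact (le_sup (f := Prod.snd) (mem_filter.2 ⟨he, h1.symm, h4⟩)).trans (le_max_right _ _)
  have hfar : #(E.filter fun e => e.1 = lo ∧ s ≤ e.2) ≤ t + 1 - s :=
    card_le_of_fst_eq fun e he => by
      obtain ⟨he, h1, h2⟩ := mem_filter.1 he
      exact ⟨h1, h2, le_sup (f := Prod.snd) (mem_filter.2 ⟨he, h1⟩)⟩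
  refine ⟨m, max (max s t) (m + 1), by omega, by omega, by omega, fun e he hm hs' => ?_, ?_⟩
  · rcases lt_max_iff.1 hs' with h | h
    · rcases lt_max_iff.1 h with h | h
      · exact hunc e he (by omega) h
      · obtain ⟨g, hg, hgt⟩ := Finset.lt_sup_iff.1 h
        exact hE.not_crossed_of_covered e he
          ⟨g, (mem_filter.1 hg).1, by rw [(mem_filter.1 hg).2]; omega, hgt⟩
    · have := hE.lt e he
      omega
  · have hsplit : E.filter (fun e => lo ≤ e.1 ∧ e.1 + 2 ≤ e.2) ⊆
        ((E.filter fun e => lo ≤ e.1 ∧ e.1 < m ∧ e.1 + 2 ≤ e.2 ∧ e.2 < s) ∪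
          E.filter fun e => e.1 = lo ∧ s ≤ e.2) ∪ E.filter fun e => m ≤ e.1 ∧ e.1 + 2 ≤ e.2 := by
      intro e he
      obtain ⟨he, h1, h2⟩ := mem_filter.1 he
      have := hinner e he
      simp only [mem_union, mem_filter, he, true_and]
      omega
    grw [card_le_card hsplit, card_union_le, card_union_le]
    omega

theorem IsPage.card_long_add_le {E : Finset (ℕ × ℕ)} (hE : IsPage E) {hi : ℕ}
    (hhi : ∀ e ∈ E, e.2 ≤ hi) {lo s : ℕ} (hlo : lo < s) (hs : s ≤ hi)
    (hunc : ∀ e ∈ E, lo ≤ e.1 → e.2 < s → ¬ Crossed E e) :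
    #(E.filter fun e => lo ≤ e.1 ∧ e.1 + 2 ≤ e.2) + lo + s + 1 ≤ 2 * hi := by
  induction h : hi - lo using Nat.strong_induction_on generalizing lo s with
  | _ d ih =>
  subst h
  by_cases hbase : hi < lo + 2
  · have : (E.filter fun e => lo ≤ e.1 ∧ e.1 + 2 ≤ e.2) = ∅ :=
      filter_eq_empty_iff.2 fun e he => by have := hhi e he; omega
    simp only [this, card_empty]
    omega
  obtain ⟨m, s', hm, hms', hs'hi, hunc', hstep⟩ :=
    hE.exists_card_long_add_le hhi hlo hs (by omega) hunc
  have := ih (hi - m) (by omega) hms' hs'hi hunc' rfl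
  omega

theorem exists_page_not_crossed_below {ι : Type*} (E : ι → Finset (ℕ × ℕ)) {P : Finset ι}
    (hP : P.Nonempty) (hE : ∀ i ∈ P, IsPage (E i)) {hi : ℕ} (hhi : ∀ i ∈ P, ∀ e ∈ E i, e.2 ≤ hi)
    {lo : ℕ} (hlo : lo + 2 ≤ hi) :
    ∃ q ∈ P, ∃ w, lo + 2 ≤ w ∧ w ≤ hi ∧
      (∀ i ∈ P, ∀ e ∈ E i, e.1 = lo → e.2 ≤ w) ∧
      ∀ e ∈ E q, lo < e.1 → e.2 < w → ¬ Crossed (E q) e := by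
  set C := (P.biUnion E).filter fun e => e.1 = lo ∧ lo + 2 ≤ e.2
  rcases C.eq_empty_or_nonempty with hC | hC
  · obtain ⟨q, hq⟩ := hP
    refine ⟨q, hq, lo + 2, le_rfl, hlo, fun i hi e he h1 => ?_, fun e he h1 h2 => ?_⟩
    · by_contra! h2
      exact (filter_eq_empty_iff.1 hC) (mem_biUnion.2 ⟨i, hi, he⟩) ⟨h1, by omega⟩
    · have := (hE q hq).lt e he
      omega
  · obtain ⟨g, hg, hmax⟩ := C.exists_max_image Prod.snd hC
    obtain ⟨hgE, hg1, hg2⟩ := mem_filter.1 hg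
    obtain ⟨q, hq, hgq⟩ := mem_biUnion.1 hgE
    refine ⟨q, hq, g.2, hg2, hhi q hq g hgq, fun i hi e he h1 => ?_, fun e he h1 h2 =>
      (hE q hq).not_crossed_of_covered e he ⟨g, hgq, by omega, h2⟩⟩
    by_contra! h2
    exact not_lt.2 (hmax e (mem_filter.2 ⟨mem_biUnion.2 ⟨i, hi, he⟩, h1, by omega⟩)) h2

theorem card_long_biUnion_add_le {ι : Type*} [DecidableEq ι] (E : ι → Finset (ℕ × ℕ))
    (P : Finset ι) (hE : ∀ i ∈ P, IsPage (E i)) {hi : ℕ} (hhi : ∀ i ∈ P, ∀ e ∈ E i, e.2 ≤ hi)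
    {lo : ℕ} (hP : lo + #P < hi) :
    #((P.biUnion E).filter fun e => lo ≤ e.1 ∧ e.1 + 2 ≤ e.2) + #P * #P + 2 * #P ≤
      2 * #P * (hi - lo) := by
  induction P using Finset.strongInduction generalizing lo with
  | H P ih =>
  rcases P.eq_empty_or_nonempty with rfl | hne
  · simp
  obtain ⟨q, hq, w, hw, hwhi, hcol, hunc⟩ :=
    exists_page_not_crossed_below E hne hE hhi (lo := lo) (by have := hne.card_pos; omega)
  have hcard : #(P.erase q) + 1 = #P := card_erase_add_one hq
  have hcolumn : #((P.biUnion E).filter fun e => e.1 = lo ∧ lo + 2 ≤ e.2) ≤ w + 1 - (lo + 2) :=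
    card_le_of_fst_eq fun e he => by
      obtain ⟨he, h1, h2⟩ := mem_filter.1 he
      obtain ⟨i, hi, he⟩ := mem_biUnion.1 he
      exact ⟨h1, h2, hcol i hi e he h1⟩
  have hpage := (hE q hq).card_long_add_le (hhi q hq) (lo := lo + 1) (by omega) hwhi
    fun e he h1 h2 => hunc e he (by omega) h2
  have hrest := ih (P.erase q) (erase_ssubset hq) (fun i hi => hE i (mem_of_mem_erase hi))
    (fun i hi => hhi i (mem_of_mem_erase hi)) (lo := lo + 1) (by omega)
  have hsplit : (P.biUnion E).filter (fun e => lo ≤ e.1 ∧ e.1 + 2 ≤ e.2) ⊆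
      (((P.biUnion E).filter fun e => e.1 = lo ∧ lo + 2 ≤ e.2) ∪
        (E q).filter fun e => lo + 1 ≤ e.1 ∧ e.1 + 2 ≤ e.2) ∪
        ((P.erase q).biUnion E).filter fun e => lo + 1 ≤ e.1 ∧ e.1 + 2 ≤ e.2 := by
    intro e he
    obtain ⟨he', h1, h2⟩ := mem_filter.1 he
    obtain ⟨i, hi, hei⟩ := mem_biUnion.1 he'
    simp only [mem_union, mem_filter, mem_biUnion, mem_erase]
    by_cases h1' : e.1 = lo
    · exact Or.inl (Or.inl ⟨⟨i, hi, hei⟩, h1', by omega⟩)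
    by_cases hiq : i = q
    · exact Or.inl (Or.inr ⟨hiq ▸ hei, by omega, h2⟩)
    · exact Or.inr ⟨⟨i, ⟨hiq, hi⟩, hei⟩, by omega, h2⟩
  grw [card_le_card hsplit, card_union_le, card_union_le, ← hcard]
  obtain ⟨d, hd⟩ : ∃ d, hi - lo = d + 1 := ⟨hi - lo - 1, by omega⟩
  rw [show hi - (lo + 1) = d by omega] at hrest
  have hfirst : #((P.biUnion E).filter fun e => e.1 = lo ∧ lo + 2 ≤ e.2) +
      #((E q).filter fun e => lo + 1 ≤ e.1 ∧ e.1 + 2 ≤ e.2) + 1 ≤ 2 * d := by omega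
  rw [hd]
  nlinarith

end Rique

theorem Function.Injective.exists_rank [Fintype V] {α : Type*} [LinearOrder α] {f : V → α}
    (hf : Function.Injective f) :
    ∃ r : V → ℕ, Function.Injective r ∧ (∀ u v, r u < r v ↔ f u < f v) ∧
      ∀ v, r v < Fintype.card V := by
  let e := (univ.image f).orderIsoOfFin (card_image_of_injective univ hf)
  refine ⟨fun v => e.symm ⟨f v, mem_image_of_mem f (mem_univ v)⟩, fun u v h => ?_,
    fun u v => ?_, fun v => (e.symm _).isLt⟩
  · exact hf (congrArg Subtype.val (e.symm.injective (Fin.ext h)))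
  · rw [← Fin.lt_def, e.symm.lt_iff_lt, Subtype.mk_lt_mk]

namespace RiqueLayout

theorem exists_pages {G : SimpleGraph V} [Fintype V] [DecidableRel G.Adj] {k : ℕ}
    (h : RiqueLayout G k) :
    ∃ E : Fin k → Finset (ℕ × ℕ), (∀ p, Rique.IsPage (E p)) ∧
      (∀ p, ∀ e ∈ E p, e.2 < Fintype.card V) ∧ #G.edgeFinset ≤ #(univ.biUnion E) := by
  obtain ⟨f, page, hf, -, hpat⟩ := h
  obtain ⟨r, hr, hrf, hrn⟩ := hf.exists_rank
  set D := univ.filter fun uv : V × V => G.Adj uv.1 uv.2 ∧ r uv.1 < r uv.2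
  have hmem : ∀ p x, x ∈ (D.filter fun uv => page uv.1 uv.2 = p).image (Prod.map r r) ↔
      ∃ u v, G.Adj u v ∧ r u < r v ∧ page u v = p ∧ (r u, r v) = x := by
    intro p x
    simp [D, and_assoc]
  refine ⟨fun p => (D.filter fun uv => page uv.1 uv.2 = p).image (Prod.map r r),
    fun p => ⟨fun e he => ?_, fun e he hcov hcr => ?_⟩, fun p e he => ?_, ?_⟩
  · obtain ⟨u, v, -, huv, -, rfl⟩ := (hmem p e).1 he
    exact huv
  · obtain ⟨b, b', hb, -, hpb, rfl⟩ := (hmem p e).1 he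
    obtain ⟨x, hx, h1, h2⟩ := hcov
    obtain ⟨a, a', ha, -, hpa, rfl⟩ := (hmem p x).1 hx
    obtain ⟨y, hy, h3, h4, h5⟩ := hcr
    obtain ⟨c, c', hc, -, hpc, rfl⟩ := (hmem p y).1 hy
    simp only [hrf] at h1 h2 h3 h4 h5
    exact hpat a a' b b' c c' ha hb hc (hpa.trans hpb.symm) (hpb.trans hpc.symm)
      ⟨h1, h3, h4, h2, h5⟩
  · obtain ⟨u, v, -, -, -, rfl⟩ := (hmem p e).1 he
    exact hrn v
  · calc #G.edgeFinset ≤ #D := card_le_card_of_surjOn (fun uv => s(uv.1, uv.2)) ?_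
      _ = #(D.image (Prod.map r r)) := (card_image_of_injective D (hr.prodMap hr)).symm
      _ ≤ _ := card_le_card fun x hx => by
        obtain ⟨⟨u, v⟩, huv, rfl⟩ := mem_image.1 hx
        exact mem_biUnion.2 ⟨page u v, mem_univ _, (hmem _ _).2 ⟨u, v, by simpa [D] using huv⟩⟩
    intro e he
    induction e using Sym2.ind with
    | h u v =>
    have hadj : G.Adj u v := by simpa using he
    rcases lt_or_gt_of_ne (hr.ne hadj.ne) with huv | hvu
    · exact ⟨(u, v), by simp [D, hadj, huv], rfl⟩
    · exact ⟨(v, u), by simp [D, hadj.symm, hvu], Sym2.eq_swap⟩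

theorem card_edgeFinset_add_le {G : SimpleGraph V} [Fintype V] [DecidableRel G.Adj] {k : ℕ}
    (h : RiqueLayout G k) (hk : k + 2 ≤ Fintype.card V) :
    #G.edgeFinset + k * k ≤ (2 * Fintype.card V - 4) * k + (Fintype.card V - 1) := by
  obtain ⟨E, hE, hlt, hedges⟩ := h.exists_pages
  have hlong := Rique.card_long_biUnion_add_le E univ (fun p _ => hE p)
    (fun p _ e he => Nat.le_sub_one_of_lt (hlt p e he)) (lo := 0) (by simp; omega)
  have hshort := Rique.card_filter_lt_add_two_le (S := univ.biUnion E)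
    (hi := Fintype.card V - 1) fun e he => by
      obtain ⟨p, -, he⟩ := mem_biUnion.1 he
      exact ⟨(hE p).lt e he, Nat.le_sub_one_of_lt (hlt p e he)⟩
  have hsplit := card_filter_add_card_filter_not (s := univ.biUnion E)
    fun e : ℕ × ℕ => 0 ≤ e.1 ∧ e.1 + 2 ≤ e.2
  simp only [zero_le, true_and, not_le, card_univ, Fintype.card_fin, Nat.sub_zero] at hlong hsplit
  obtain ⟨n, hn⟩ : ∃ n, Fintype.card V = n + 2 := ⟨_, (Nat.sub_add_cancel (by omega)).symm⟩
  rw [hn, show n + 2 - 1 = n + 1 by omega] at hlong hshort ⊢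
  rw [show 2 * (n + 2) - 4 = 2 * n by omega]
  nlinarith

theorem exists_of_finite [Finite V] (G : SimpleGraph V) : ∃ k, RiqueLayout G k := by
  classical
  cases nonempty_fintype V
  refine ⟨Fintype.card (Sym2 V), fun v => Fintype.equivFin V v,
    fun u v => Fintype.equivFin (Sym2 V) s(u, v),
    fun u v h => (Fintype.equivFin V).injective (Fin.ext h), fun u v => congrArg _ Sym2.eq_swap, ?_⟩
  -- a page carries a single edge, and the pattern needs two distinct edges on one page
  intro a a' b b' c c' _ _ _ hab _ hlt
  rcases Sym2.eq_iff.1 ((Fintype.equivFin _).injective hab) with ⟨rfl, rfl⟩ | ⟨rfl, rfl⟩ <;>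
    omega

end RiqueLayout

theorem riqueLayout_riqueNumber [Finite V] (G : SimpleGraph V) : RiqueLayout G (riqueNumber G) :=
  Nat.sInf_mem (RiqueLayout.exists_of_finite G)

theorem one_sub_inv_sqrt_two_mul_le {n k : ℕ}
    (h : k + 2 ≤ n → n.choose 2 + k * k ≤ (2 * n - 4) * k + (n - 1)) :
    (1 - 1 / √2) * ((n : ℝ) - 2) ≤ k := by
  have hs : √2 * √2 = 2 := Real.mul_self_sqrt zero_le_two
  have hs1 : 1 ≤ √2 := Real.one_le_sqrt.2 one_le_two
  have hc : 0 ≤ 1 - 1 / √2 ∧ 1 - 1 / √2 ≤ 1 := by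
    constructor
    · rw [sub_nonneg, div_le_one (by positivity)]; exact hs1
    · have : 0 ≤ 1 / √2 := by positivity
      linarith
  rcases lt_or_ge n (k + 2) with hn | hn
  · have : (n : ℝ) < k + 2 := by exact_mod_cast hn
    nlinarith [mul_nonneg hc.1 (by linarith : (0 : ℝ) ≤ k + 2 - n),
      mul_nonneg (by linarith : 0 ≤ 1 - (1 - 1 / √2)) (Nat.cast_nonneg (α := ℝ) k)]
  have h := h hn
  have hcast : ((n.choose 2 : ℕ) : ℝ) + k * k ≤ (2 * n - 4) * k + (n - 1) := by
    have := (Nat.cast_le (α := ℝ)).2 h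
    push_cast [Nat.cast_sub (by omega : 4 ≤ 2 * n), Nat.cast_sub (by omega : 1 ≤ n)] at this
    linarith
  rw [Nat.cast_choose_two] at hcast
  set M : ℝ := n - 2
  have hkM : (k : ℝ) ≤ M := by simp only [M]; rw [le_sub_iff_add_le]; exact_mod_cast hn
  have hsq : 2 * (M - k) ^ 2 ≤ M ^ 2 := by simp only [M] at *; nlinarith
  have hroot : √2 * (M - k) ≤ M := by nlinarith
  rw [one_sub_div (by positivity), div_mul_eq_mul_div, div_le_iff₀ (by positivity)]
  linarith

/-- The rique-number of `K_n` is at least `(1 − 1/√2)(n − 2)`. -/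
theorem riqueNumber_complete_lower_bound (n : ℕ) :
    ((1 : ℝ) - 1 / Real.sqrt 2) * ((n : ℝ) - 2) ≤
      (riqueNumber (SimpleGraph.completeGraph (Fin n)) : ℝ) := by
  refine one_sub_inv_sqrt_two_mul_le fun hn => ?_
  have := (riqueLayout_riqueNumber (SimpleGraph.completeGraph (Fin n))).card_edgeFinset_add_le
    (by simpa using hn)
  have hK : #(SimpleGraph.completeGraph (Fin n)).edgeFinset = n.choose 2 := by
    simpa using SimpleGraph.card_edgeFinset_top_eq_card_choose_two (V := Fin n)
  rwa [hK, Fintype.card_fin] at this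
end

section
/- The rique-number of the complete graph K_n is at most ⌈n/3⌉. -/
variable {V : Type*}

/-!
Order the vertices naturally and let `k = ⌈n/3⌉`. Page `i < k` receives every edge whose smaller
endpoint is the vertex `i`, plus one page of the circular stack layout of the clique on the last
`m = n - k ≤ 2k` vertices, in which the edge `{i, j}` lies on page `⌊((i + j) mod m) / 2⌋`: the
index sums of two crossing clique edges differ by at least `2` and at most `m - 2`, so they land on
different pages. In a rique pattern `a < b < c < b' < a'`, `b' < c'` the edges `aa'` and `bb'`
have distinct smaller endpoints, so `b` is not among the first `k` vertices; then `bb'` and `cc'`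
are crossing clique edges, which never share a page.
-/

theorem Nat.mod_div_two_ne_of_add_two_le {s t m : ℕ} (hst : s + 2 ≤ t) (hts : t + 2 ≤ s + m) :
    s % m / 2 ≠ t % m / 2 := by
  have hs := Nat.mod_add_div s m
  have ht := Nat.mod_add_div t m
  have hsm := Nat.mod_lt s (by omega : 0 < m)
  have htm := Nat.mod_lt t (by omega : 0 < m)
  rcases lt_trichotomy (s / m) (t / m) with hq | hq | hq
  · have := Nat.mul_le_mul_left m (Nat.succ_le_of_lt hq)
    rw [Nat.mul_succ] at this
    omega
  · rw [hq] at hs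
    omega
  · have := Nat.mul_le_mul_left m (Nat.succ_le_of_lt hq)
    rw [Nat.mul_succ] at this
    omega

theorem riqueLayout_of_pages {n p k : ℕ} (G : SimpleGraph (Fin n)) (page : ℕ → ℕ → ℕ)
    (page_lt : ∀ x y, x < n → y < n → page x y < p) (page_comm : ∀ x y, page x y = page y x)
    (page_ne_of_lt : ∀ a a' b b', a < b → b < k → a < a' → b < b' → page a a' ≠ page b b')
    (page_ne_of_cross : ∀ b c b' c', k ≤ b → b < c → c < b' → b' < c' → c' < n →
      page b b' ≠ page c c') :
    RiqueLayout G p := by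
  refine ⟨Fin.val, fun u v => ⟨page u v, page_lt u v u.2 v.2⟩, Fin.val_injective,
    fun u v => Fin.ext (page_comm u v), ?_⟩
  rintro a a' b b' c c' - - - hab hbc ⟨h₁, h₂, h₃, h₄, h₅⟩
  rcases lt_or_ge b.val k with hb | hb
  · exact page_ne_of_lt a a' b b' h₁ hb (by omega) (by omega) (Fin.val_eq_of_eq hab)
  · exact page_ne_of_cross b c b' c' hb h₂ h₃ h₅ c'.2 (Fin.val_eq_of_eq hbc)

def circularStackPage (m i j : ℕ) : ℕ := (i + j) % m / 2

theorem circularStackPage_ne_of_cross {m i j i' j' : ℕ} (h₁ : i < j) (h₂ : j < i') (h₃ : i' < j')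
    (h₄ : j' < m) : circularStackPage m i i' ≠ circularStackPage m j j' :=
  Nat.mod_div_two_ne_of_add_two_le (by omega) (by omega)

def tailStackPage (k m x y : ℕ) : ℕ :=
  if min x y < k then min x y else circularStackPage m (x - k) (y - k)

theorem tailStackPage_comm (k m x y : ℕ) : tailStackPage k m x y = tailStackPage k m y x := by
  simp only [tailStackPage, circularStackPage, min_comm x y, Nat.add_comm (x - k)]

theorem tailStackPage_of_lt {k m x y : ℕ} (hx : x < k) (hxy : x < y) :
    tailStackPage k m x y = x := by
  simp [tailStackPage, min_eq_left hxy.le, hx]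

theorem tailStackPage_of_le {k m x y : ℕ} (hx : k ≤ x) (hxy : x < y) :
    tailStackPage k m x y = circularStackPage m (x - k) (y - k) := by
  simp [tailStackPage, min_eq_left hxy.le, hx]

theorem tailStackPage_lt {k m x y : ℕ} (hm : m ≤ 2 * k) (hx : x < k + m) (hy : y < k + m) :
    tailStackPage k m x y < k := by
  unfold tailStackPage circularStackPage
  split_ifs with h
  · exact h
  · have := Nat.mod_lt (x - k + (y - k)) (by omega : 0 < m)
    omega

theorem riqueLayout_of_le_three_mul {n k : ℕ} (G : SimpleGraph (Fin n)) (hn : n ≤ 3 * k) :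
    RiqueLayout G k := by
  refine riqueLayout_of_pages (k := k) G (tailStackPage k (n - k))
    (fun x y hx hy => tailStackPage_lt (by omega) (by omega) (by omega)) (tailStackPage_comm k _)
    (fun a a' b b' hab hb ha' hb' => ?_) (fun b c b' c' hb h₁ h₂ h₃ h₄ => ?_)
  · rw [tailStackPage_of_lt (hab.trans hb) ha', tailStackPage_of_lt hb hb']
    exact hab.ne
  · rw [tailStackPage_of_le hb (h₁.trans h₂), tailStackPage_of_le (hb.trans h₁.le) (h₂.trans h₃)]
    exact circularStackPage_ne_of_cross (by omega) (by omega) (by omega) (by omega)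

/-- The rique-number of `K_n` is at most `⌈n/3⌉`. -/
theorem riqueNumber_complete_upper_bound (n : ℕ) :
    riqueNumber (SimpleGraph.completeGraph (Fin n)) ≤ (n + 2) / 3 :=
  Nat.sInf_le (riqueLayout_of_le_three_mul _ (by omega))
end

section
/- Let G be a graph with blocks B_1,…,B_{k+1} arranged in a path in the block-cut tree with cut vertices c_1,…,c_k, and set c_0 = s, c_{k+1} = t. Then G is st-1-sided (admits a planar embedding with a strongly 1-sided Hamiltonian path from s to t) if and only if each block B_i is c_{i−1}c_i-1-sided. -/
variable {V : Type*}

/-- A combinatorial description of a plane embedding in which the vertex order `f`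
is a strongly 1-sided Hamiltonian path: each edge (oriented from its earlier to its
later endpoint) leaves its earlier endpoint on the left, drawn either as a
*head-edge* or a *tail-edge*; planarity amounts to: two head-edges never cross,
two tail-edges never nest, and a tail-edge never starts strictly inside a head-edge. -/
def OneSidedLayout (H : SimpleGraph V) (f : V → ℕ) : Prop :=
  ∃ tl : V → V → Prop,
    (∀ u u' w w', H.Adj u u' → H.Adj w w' → f u < f u' → f w < f w' →
      ¬ tl u u' → ¬ tl w w' → ¬ (f u < f w ∧ f w < f u' ∧ f u' < f w')) ∧
    (∀ u u' w w', H.Adj u u' → H.Adj w w' → f u < f u' → f w < f w' →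
      tl u u' → tl w w' → ¬ (f u < f w ∧ f w < f w' ∧ f w' < f u')) ∧
    (∀ u u' w w', H.Adj u u' → H.Adj w w' → f u < f u' → f w < f w' →
      ¬ tl u u' → tl w w' → ¬ (f u < f w ∧ f w < f u'))

/-- `G` is `st`-1-sided: it admits a planar embedding containing a strongly
1-sided Hamiltonian path from `s` to `t`. -/
def IsStOneSided (G : SimpleGraph V) [Fintype V] (s t : V) : Prop :=
  ∃ g : V ≃ Fin (Fintype.card V),
    (∀ v : V, (g v).val = 0 → v = s) ∧
    (∀ v : V, (g v).val = Fintype.card V - 1 → v = t) ∧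
    (∀ u v : V, (g u).val + 1 = (g v).val → G.Adj u v) ∧
    OneSidedLayout G (fun v => (g v).val)

theorem isStOneSided_iff (G : SimpleGraph V) [Fintype V] (s t : V) :
    IsStOneSided G s t ↔ ∃ f : V → ℕ, Function.Injective f ∧
      (∀ v, f v < Fintype.card V) ∧ f s = 0 ∧ f t = Fintype.card V - 1 ∧
      (∀ u v, f u + 1 = f v → G.Adj u v) ∧ OneSidedLayout G f := by
  constructor
  · rintro ⟨g, h0, h1, h2, h3⟩
    have hcard : 0 < Fintype.card V := Fintype.card_pos_iff.mpr ⟨s⟩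
    refine ⟨fun v => (g v).val, fun u v h => g.injective (Fin.ext h), fun v => (g v).isLt,
      ?_, ?_, h2, h3⟩
    · have := h0 (g.symm ⟨0, hcard⟩) (by simp)
      rw [← this]; simp
    · have := h1 (g.symm ⟨Fintype.card V - 1, by omega⟩) (by simp)
      rw [← this]; simp
  · rintro ⟨f, hinj, hlt, hfs, hft, hadj, hlay⟩
    have hbij : Function.Bijective (fun v => (⟨f v, hlt v⟩ : Fin (Fintype.card V))) := by
      rw [Fintype.bijective_iff_injective_and_card]
      exact ⟨fun u v h => hinj (by simpa [Fin.ext_iff] using h), by simp⟩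
    let g := Equiv.ofBijective _ hbij
    have hg : ∀ v, (g v).val = f v := fun v => rfl
    refine ⟨g, ?_, ?_, ?_, ?_⟩
    · intro v h; exact hinj (by rw [hg] at h; omega)
    · intro v h; exact hinj (by rw [hg] at h; omega)
    · intro u v h; exact hadj u v (by rwa [hg, hg] at h)
    · simpa only [hg] using hlay

theorem surj_of_inj [Fintype V] (f : V → ℕ) (hinj : Function.Injective f)
    (hlt : ∀ v, f v < Fintype.card V) : ∀ m < Fintype.card V, ∃ v, f v = m := by
  have hbij : Function.Bijective (fun v => (⟨f v, hlt v⟩ : Fin (Fintype.card V))) := by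
    rw [Fintype.bijective_iff_injective_and_card]
    exact ⟨fun u v h => hinj (by simpa [Fin.ext_iff] using h), by simp⟩
  intro m hm
  obtain ⟨v, hv⟩ := hbij.2 ⟨m, hm⟩
  exact ⟨v, by simpa [Fin.ext_iff] using hv⟩

def offs (nn : ℕ → ℕ) : ℕ → ℕ
  | 0 => 0
  | m + 1 => offs nn m + nn m - 1

lemma offs_mono (nn : ℕ → ℕ) (h1 : ∀ m, 1 ≤ nn m) : Monotone (offs nn) := by
  apply monotone_nat_of_le_succ
  intro m
  have := h1 m
  show offs nn m ≤ offs nn m + nn m - 1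
  omega

section Main
variable [Fintype V] (G : SimpleGraph V) (k : ℕ)
    (B : Fin (k + 1) → G.Subgraph) [∀ i, Fintype (B i).verts]
    (c : Fin (k + 2) → V) (s t : V)

theorem forward_dir
    (hs : c 0 = s) (ht : c (Fin.last (k + 1)) = t)
    (hmem1 : ∀ i : Fin (k + 1), c i.castSucc ∈ (B i).verts)
    (hmem2 : ∀ i : Fin (k + 1), c i.succ ∈ (B i).verts)
    (hcover : ∀ v : V, ∃ i, v ∈ (B i).verts)
    (hedges : ∀ u v : V, G.Adj u v → ∃ i, (B i).Adj u v)
    (hconsec : ∀ i : Fin (k + 1), ∀ h : i.val + 1 < k + 1,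
      (B i).verts ∩ (B ⟨i.val + 1, h⟩).verts = {c i.succ})
    (hfar : ∀ i j : Fin (k + 1), i.val + 1 < j.val →
      (B i).verts ∩ (B j).verts = ∅)
    (main : IsStOneSided G s t) :
    ∀ i : Fin (k + 1),
      IsStOneSided (B i).coe ⟨c i.castSucc, hmem1 i⟩ ⟨c i.succ, hmem2 i⟩ := by
  rw [isStOneSided_iff] at main
  obtain ⟨f, hinj, hlt, hfs, hft, hadj, tl, hl1, hl2, hl3⟩ := main
  set N := Fintype.card V with hN
  have hsurj := surj_of_inj f hinj hlt
  -- uniqueness of blocks containing two distinct vertices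
  have aux : ∀ (i j : Fin (k+1)) (u w : V), u ≠ w → i.val < j.val →
      u ∈ (B i).verts → u ∈ (B j).verts → w ∈ (B i).verts → w ∈ (B j).verts → False := by
    intro i j u w hne hij hui huj hwi hwj
    rcases Nat.lt_or_ge (i.val + 1) j.val with h | h
    · have := hfar i j h
      exact absurd (Set.mem_inter hui huj) (by rw [this]; exact Set.notMem_empty u)
    · have hj : j.val = i.val + 1 := by omega
      have hlt' : i.val + 1 < k + 1 := by omega
      have hjeq : j = ⟨i.val + 1, hlt'⟩ := Fin.ext hj
      have := hconsec i hlt'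
      have hu : u = c i.succ := by
        have : u ∈ ({c i.succ} : Set V) := this ▸ Set.mem_inter hui (hjeq ▸ huj)
        exact this
      have hw : w = c i.succ := by
        have : w ∈ ({c i.succ} : Set V) := (hconsec i hlt') ▸ Set.mem_inter hwi (hjeq ▸ hwj)
        exact this
      exact hne (hu.trans hw.symm)
  have uniq : ∀ (i j : Fin (k+1)) (u w : V), u ≠ w →
      u ∈ (B i).verts → u ∈ (B j).verts → w ∈ (B i).verts → w ∈ (B j).verts → i = j := by
    intro i j u w hne hui huj hwi hwj
    rcases lt_trichotomy i.val j.val with h | h | h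
    · exact absurd (aux i j u w hne h hui huj hwi hwj) not_false
    · exact Fin.ext h
    · exact absurd (aux j i u w hne h huj hui hwj hwi) not_false
  -- Low / High
  set Low : ℕ → V → Prop := fun i v => ∃ j : Fin (k+1), j.val ≤ i ∧ v ∈ (B j).verts with hLow
  set High : ℕ → V → Prop := fun i v => ∃ j : Fin (k+1), i < j.val ∧ v ∈ (B j).verts with hHigh
  have lowHigh : ∀ i (hik : i < k), ∀ v, Low i v → High i v → v = c ⟨i+1, by omega⟩ := by
    rintro i hik v ⟨j, hj, hvj⟩ ⟨j', hj', hvj'⟩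
    rcases Nat.lt_or_ge (j.val + 1) j'.val with h | h
    · have := hfar j j' h
      exact absurd (Set.mem_inter hvj hvj') (by rw [this]; exact Set.notMem_empty v)
    · have hj'1 : j'.val = j.val + 1 := by omega
      have hji : j.val = i := by omega
      have hlt' : j.val + 1 < k + 1 := by omega
      have hjeq : j' = ⟨j.val + 1, hlt'⟩ := Fin.ext hj'1
      have hv : v = c j.succ := by
        have : v ∈ ({c j.succ} : Set V) := by
          rw [← hconsec j hlt']; exact Set.mem_inter hvj (hjeq ▸ hvj')
        exact this
      rw [hv]; congr 1; exact Fin.ext (by simp [hji])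
  have claimLow : ∀ i (hik : i < k), ∀ n, ∀ v, f v ≤ n → f v ≤ f (c ⟨i+1, by omega⟩) → Low i v := by
    intro i hik n
    induction n with
    | zero =>
      intro v hv _
      have : v = s := hinj (by omega)
      subst this
      exact ⟨0, Nat.zero_le i, hs ▸ (by simpa using hmem1 0)⟩
    | succ n IH =>
      intro v hv hle
      rcases Nat.lt_or_ge (f v) (n+1) with h | h
      · exact IH v (by omega) hle
      · have h0 : 0 < f v := by omega
        have hvN := hlt v
        obtain ⟨u, hu⟩ := hsurj (f v - 1) (by omega)
        have hadj' := hadj u v (by omega)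
        have hlowu : Low i u := IH u (by omega) (by omega)
        obtain ⟨j, hj⟩ := hedges u v hadj'
        by_cases hji : j.val ≤ i
        · exact ⟨j, hji, hj.snd_mem⟩
        · have hhi : High i u := ⟨j, by omega, hj.fst_mem⟩
          have := lowHigh i hik u hlowu hhi
          rw [this] at hu
          omega
  have claimHigh : ∀ i (hik : i < k), ∀ n, ∀ v, N - 1 - f v ≤ n → f (c ⟨i+1, by omega⟩) ≤ f v →
      High i v := by
    intro i hik n
    induction n with
    | zero =>
      intro v hv _
      have hvN : f v = N - 1 := by have := hlt v; omega
      have : v = t := hinj (by omega)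
      subst this
      refine ⟨⟨k, by omega⟩, hik, ?_⟩
      have := hmem2 ⟨k, by omega⟩
      rwa [show (⟨k, by omega⟩ : Fin (k+1)).succ = Fin.last (k+1) from Fin.ext (by simp), ht] at this
    | succ n IH =>
      intro v hv hge
      rcases Nat.lt_or_ge n (N - 1 - f v) with h | h
      · have hfv : f v + 1 < N := by omega
        obtain ⟨u, hu⟩ := hsurj (f v + 1) (by omega)
        have hadj' := hadj v u (by omega)
        have hhiu : High i u := IH u (by omega) (by omega)
        obtain ⟨j, hj⟩ := hedges v u hadj'
        by_cases hji : i < j.val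
        · exact ⟨j, hji, hj.fst_mem⟩
        · have hlou : Low i u := ⟨j, by omega, hj.snd_mem⟩
          have := lowHigh i hik u hlou hhiu
          rw [this] at hu
          omega
      · exact IH v (by omega) hge
  have lowLe : ∀ i (hik : i < k), ∀ v, Low i v → f v ≤ f (c ⟨i+1, by omega⟩) := by
    intro i hik v hv
    by_contra h
    have hhi : High i v := claimHigh i hik (N - 1 - f v) v le_rfl (by omega)
    have := lowHigh i hik v hv hhi
    rw [this] at h
    omega
  have highGe : ∀ i (hik : i < k), ∀ v, High i v → f (c ⟨i+1, by omega⟩) ≤ f v := by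
    intro i hik v hv
    by_contra h
    have hlo : Low i v := claimLow i hik (f v) v le_rfl (by omega)
    have := lowHigh i hik v hlo hv
    rw [this] at h
    omega
  -- contiguity
  have conv : ∀ (i : Fin (k+1)) (v : V), v ∈ (B i).verts ↔
      (f (c i.castSucc) ≤ f v ∧ f v ≤ f (c i.succ)) := by
    intro i v
    constructor
    · intro hv
      constructor
      · rcases Nat.eq_zero_or_pos i.val with h0 | h0
        · have : c i.castSucc = s := by
            rw [← hs]; congr 1; exact Fin.ext (by simp [h0])
          rw [this, hfs]; omega
        · have hik : i.val - 1 < k := by omega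
          have := highGe (i.val - 1) hik v ⟨i, by omega, hv⟩
          have hcc : (⟨i.val - 1 + 1, by omega⟩ : Fin (k+2)) = i.castSucc :=
            Fin.ext (by simp; omega)
          rwa [hcc] at this
      · rcases Nat.lt_or_ge i.val k with hik | hik
        · have := lowLe i.val hik v ⟨i, le_rfl, hv⟩
          have hcc : (⟨i.val + 1, by omega⟩ : Fin (k+2)) = i.succ := Fin.ext (by simp)
          rwa [hcc] at this
        · have hik' : i.val = k := by omega
          have : c i.succ = t := by
            rw [← ht]; congr 1; exact Fin.ext (by simp [hik'])
          rw [this, hft]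
          have := hlt v; omega
    · rintro ⟨h1, h2⟩
      obtain ⟨j, hj⟩ := hcover v
      rcases lt_trichotomy j.val i.val with h | h | h
      · have hik : i.val - 1 < k := by omega
        have := lowLe (i.val - 1) hik v ⟨j, by omega, hj⟩
        have hcc : (⟨i.val - 1 + 1, by omega⟩ : Fin (k+2)) = i.castSucc :=
          Fin.ext (by simp; omega)
        rw [hcc] at this
        have : v = c i.castSucc := hinj (by omega)
        rw [this]; exact hmem1 i
      · have : j = i := Fin.ext h
        rwa [this] at hj
      · have hik : i.val < k := by omega
        have := highGe i.val hik v ⟨j, h, hj⟩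
        have hcc : (⟨i.val + 1, by omega⟩ : Fin (k+2)) = i.succ := Fin.ext (by simp)
        rw [hcc] at this
        have : v = c i.succ := hinj (by omega)
        rw [this]; exact hmem2 i
  -- per block
  intro i
  rw [isStOneSided_iff]
  set a := f (c i.castSucc) with ha
  set b := f (c i.succ) with hb
  have hab : a ≤ b := ((conv i _).mp (hmem2 i)).1
  have hbN : b < N := hlt _
  set fi : (B i).verts → ℕ := fun v => f v.val - a with hfi
  have hmemf : ∀ v : (B i).verts, a ≤ f v.val ∧ f v.val ≤ b := fun v => (conv i _).mp v.2
  have hinji : Function.Injective fi := by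
    intro u v h
    have hu := hmemf u; have hv := hmemf v
    exact Subtype.ext (hinj (by simp only [hfi] at h; omega))
  have hcard : Fintype.card (B i).verts = b - a + 1 := by
    have hbij : Function.Bijective (fun v : (B i).verts => (⟨fi v, by
        have := hmemf v; simp only [hfi]; omega⟩ : Fin (b - a + 1))) := by
      constructor
      · intro u v h
        exact hinji (by simpa [Fin.ext_iff] using h)
      · rintro ⟨m, hm⟩
        obtain ⟨v, hv⟩ := hsurj (a + m) (by omega)
        have hvm : v ∈ (B i).verts := (conv i v).mpr (by omega)
        exact ⟨⟨v, hvm⟩, by simp [Fin.ext_iff, hfi, hv]⟩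
    rw [Fintype.card_of_bijective hbij, Fintype.card_fin]
  refine ⟨fi, hinji, ?_, ?_, ?_, ?_, ?_⟩
  · intro v; have := hmemf v; rw [hcard]; simp only [hfi]; omega
  · simp only [hfi]; omega
  · rw [hcard]; simp only [hfi]; omega
  · intro u v h
    have hu := hmemf u; have hv := hmemf v
    have hfuv : f u.val + 1 = f v.val := by simp only [hfi] at h; omega
    have hadj' := hadj _ _ hfuv
    obtain ⟨j, hj⟩ := hedges _ _ hadj'
    have hne : u.val ≠ v.val := hadj'.ne
    have hji : j = i := uniq j i u.val v.val hne hj.fst_mem u.2 hj.snd_mem v.2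
    rw [SimpleGraph.Subgraph.coe_adj]
    rw [hji] at hj
    exact hj
  · refine ⟨fun x y => tl x.val y.val, ?_, ?_, ?_⟩
    · intro u u' w w' huu hww h1 h2 h3 h4
      have hu := hmemf u; have hu' := hmemf u'; have hw := hmemf w; have hw' := hmemf w'
      have g1 := ((B i).coe_adj u u').mp huu
      have g2 := ((B i).coe_adj w w').mp hww
      have := hl1 u.val u'.val w.val w'.val g1.adj_sub g2.adj_sub
        (by simp only [hfi] at h1; omega) (by simp only [hfi] at h2; omega) h3 h4
      simp only [hfi]
      omega
    · intro u u' w w' huu hww h1 h2 h3 h4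
      have hu := hmemf u; have hu' := hmemf u'; have hw := hmemf w; have hw' := hmemf w'
      have g1 := ((B i).coe_adj u u').mp huu
      have g2 := ((B i).coe_adj w w').mp hww
      have := hl2 u.val u'.val w.val w'.val g1.adj_sub g2.adj_sub
        (by simp only [hfi] at h1; omega) (by simp only [hfi] at h2; omega) h3 h4
      simp only [hfi]
      omega
    · intro u u' w w' huu hww h1 h2 h3 h4
      have hu := hmemf u; have hu' := hmemf u'; have hw := hmemf w; have hw' := hmemf w'
      have g1 := ((B i).coe_adj u u').mp huu
      have g2 := ((B i).coe_adj w w').mp hww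
      have := hl3 u.val u'.val w.val w'.val g1.adj_sub g2.adj_sub
        (by simp only [hfi] at h1; omega) (by simp only [hfi] at h2; omega) h3 h4
      simp only [hfi]
      omega

theorem backward_dir
    (hs : c 0 = s) (ht : c (Fin.last (k + 1)) = t)
    (hmem1 : ∀ i : Fin (k + 1), c i.castSucc ∈ (B i).verts)
    (hmem2 : ∀ i : Fin (k + 1), c i.succ ∈ (B i).verts)
    (hcover : ∀ v : V, ∃ i, v ∈ (B i).verts)
    (hedges : ∀ u v : V, G.Adj u v → ∃ i, (B i).Adj u v)
    (hconsec : ∀ i : Fin (k + 1), ∀ h : i.val + 1 < k + 1,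
      (B i).verts ∩ (B ⟨i.val + 1, h⟩).verts = {c i.succ})
    (hfar : ∀ i j : Fin (k + 1), i.val + 1 < j.val →
      (B i).verts ∩ (B j).verts = ∅)
    (hb : ∀ i : Fin (k + 1),
      IsStOneSided (B i).coe ⟨c i.castSucc, hmem1 i⟩ ⟨c i.succ, hmem2 i⟩) :
    IsStOneSided G s t := by
  simp only [isStOneSided_iff] at hb
  choose F hFinj hFlt hFs hFt hFadj TL hT1 hT2 hT3 using hb
  set n : Fin (k+1) → ℕ := fun i => Fintype.card (B i).verts with hn
  set nn : ℕ → ℕ := fun m => if h : m < k + 1 then n ⟨m, h⟩ else 1 with hnn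
  have hnncoe : ∀ i : Fin (k+1), nn i.val = n i := by
    intro i
    simp only [hnn, dif_pos i.isLt, Fin.eta]
  have hn1 : ∀ i : Fin (k+1), 1 ≤ n i := by
    intro i
    exact Fintype.card_pos_iff.mpr ⟨⟨c i.castSucc, hmem1 i⟩⟩
  have hnn1 : ∀ m, 1 ≤ nn m := by
    intro m
    simp only [hnn]
    split
    · exact hn1 _
    · exact le_refl 1
  set o : ℕ → ℕ := offs nn with ho
  have osucc : ∀ m, o (m+1) + 1 = o m + nn m := by
    intro m
    have := hnn1 m
    show (offs nn m + nn m - 1) + 1 = offs nn m + nn m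
    omega
  have omono : ∀ a b : ℕ, a ≤ b → o a ≤ o b := fun a b h => offs_mono nn hnn1 h
  -- key separation: i < j → o i + nn i ≤ o j + 1
  have osep : ∀ a b : ℕ, a < b → o a + nn a ≤ o b + 1 := by
    intro a b h
    have h1 := osucc a
    have h2 := omono (a+1) b h
    omega
  -- global position function
  set Fg : V → ℕ := fun v =>
    o (hcover v).choose.val + F (hcover v).choose ⟨v, (hcover v).choose_spec⟩ with hFg
  -- well-definedness
  have aux2 : ∀ (i j : Fin (k+1)) (v : V) (hv : v ∈ (B i).verts) (hw : v ∈ (B j).verts),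
      i.val < j.val → o i.val + F i ⟨v, hv⟩ = o j.val + F j ⟨v, hw⟩ := by
    intro i j v hv hw hij
    rcases Nat.lt_or_ge (i.val + 1) j.val with h | h
    · have := hfar i j h
      exact absurd (Set.mem_inter hv hw) (by rw [this]; exact Set.notMem_empty v)
    · have hj1 : j.val = i.val + 1 := by omega
      have hlt' : i.val + 1 < k + 1 := by omega
      have hjeq : j = ⟨i.val + 1, hlt'⟩ := Fin.ext hj1
      have hvc : v = c i.succ := by
        have : v ∈ ({c i.succ} : Set V) := by
          rw [← hconsec i hlt']; exact Set.mem_inter hv (hjeq ▸ hw)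
        exact this
      have e1 : F i ⟨v, hv⟩ = n i - 1 := by
        have : (⟨v, hv⟩ : (B i).verts) = ⟨c i.succ, hmem2 i⟩ := Subtype.ext hvc
        rw [this]; exact hFt i
      have e2 : F j ⟨v, hw⟩ = 0 := by
        have hcc : c j.castSucc = c i.succ := by
          congr 1; exact Fin.ext (by simp [hj1])
        have : (⟨v, hw⟩ : (B j).verts) = ⟨c j.castSucc, hmem1 j⟩ := by
          apply Subtype.ext
          show v = c j.castSucc
          rw [hcc]
          exact hvc
        rw [this]; exact hFs j
      have e3 := osucc i.val
      have e4 : nn i.val = n i := hnncoe i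
      have e5 := hn1 i
      rw [e1, e2, hj1]
      omega
  have W0 : ∀ (i j : Fin (k+1)) (v : V) (hv : v ∈ (B i).verts) (hw : v ∈ (B j).verts),
      o i.val + F i ⟨v, hv⟩ = o j.val + F j ⟨v, hw⟩ := by
    intro i j v hv hw
    rcases lt_trichotomy i.val j.val with h | h | h
    · exact aux2 i j v hv hw h
    · have : i = j := Fin.ext h
      subst this; rfl
    · exact (aux2 j i v hw hv h).symm
  have W : ∀ (i : Fin (k+1)) (v : V) (hv : v ∈ (B i).verts),
      Fg v = o i.val + F i ⟨v, hv⟩ :=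
    fun i v hv => W0 (hcover v).choose i v (hcover v).choose_spec hv
  have hFltn : ∀ (i : Fin (k+1)) (x : (B i).verts), F i x < n i := fun i x => hFlt i x
  set M : ℕ := o k + nn k - 1 with hM
  have hbound : ∀ (i : Fin (k+1)) (v : V) (hv : v ∈ (B i).verts),
      o i.val ≤ Fg v ∧ Fg v ≤ o i.val + n i - 1 := by
    intro i v hv
    rw [W i v hv]
    have := hFltn i ⟨v, hv⟩
    omega
  have hIM : ∀ i : Fin (k+1), o i.val + n i - 1 ≤ M := by
    intro i
    rcases Nat.lt_or_ge i.val k with h | h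
    · have := osep i.val k h
      have := hnncoe i
      have := hnn1 k
      omega
    · have h1 : i.val = k := by omega
      have h2 := hnncoe i
      rw [h1] at h2 ⊢
      omega
  have hFgM : ∀ v, Fg v ≤ M := by
    intro v
    obtain ⟨i, hi⟩ := hcover v
    have := (hbound i v hi).2
    have := hIM i
    omega
  -- injectivity
  have inj0 : ∀ (d : ℕ) (i j : Fin (k+1)) (u : V) (hu : u ∈ (B i).verts)
      (v : V) (hv : v ∈ (B j).verts), j.val = i.val + d →
      o i.val + F i ⟨u, hu⟩ = o j.val + F j ⟨v, hv⟩ → u = v := by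
    intro d
    induction d with
    | zero =>
      intro i j u hu v hv hij heq
      have : j = i := Fin.ext (by omega)
      subst this
      have : F j ⟨u, hu⟩ = F j ⟨v, hv⟩ := by omega
      have := hFinj j this
      exact congrArg Subtype.val this
    | succ d IH =>
      intro i j u hu v hv hij heq
      have hik : i.val + 1 < k + 1 := by have := j.isLt; omega
      set i' : Fin (k+1) := ⟨i.val + 1, hik⟩ with hi'
      have hmo : o i.val + nn i.val ≤ o j.val + 1 := osep i.val j.val (by omega)
      have hFi := hFltn i ⟨u, hu⟩
      have e4 : nn i.val = n i := hnncoe i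
      have hFtop : F i ⟨u, hu⟩ = n i - 1 := by
        have := hFltn j ⟨v, hv⟩
        omega
      have huc : u = c i.succ := by
        have : F i ⟨u, hu⟩ = F i ⟨c i.succ, hmem2 i⟩ := by rw [hFtop, hFt i]
        have := hFinj i this
        exact congrArg Subtype.val this
      have hu' : u ∈ (B i').verts := by
        have hcc : c i'.castSucc = c i.succ := by congr 1
        rw [huc, ← hcc]
        exact hmem1 i'
      have hF0 : F i' ⟨u, hu'⟩ = 0 := by
        have hcc : c i'.castSucc = c i.succ := by congr 1
        have huc' : u = c i'.castSucc := by rw [hcc]; exact huc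
        have : (⟨u, hu'⟩ : (B i').verts) = ⟨c i'.castSucc, hmem1 i'⟩ := Subtype.ext huc'
        rw [this]; exact hFs i'
    -- o i' = o i + n i - 1
      have e3 := osucc i.val
      have hn1i := hn1 i
      refine IH i' j u hu' v hv (by simp [hi']; omega) ?_
      rw [hF0]
      show o (i.val + 1) + 0 = o j.val + F j ⟨v, hv⟩
      rw [hFtop] at heq
      omega
  have Fginj : Function.Injective Fg := by
    intro u v heq
    obtain ⟨i, hi⟩ : ∃ i, u ∈ (B i).verts := hcover u
    obtain ⟨j, hj⟩ : ∃ j, v ∈ (B j).verts := hcover v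
    rw [W i u hi, W j v hj] at heq
    rcases le_or_gt i.val j.val with h | h
    · exact inj0 (j.val - i.val) i j u hi v hj (by omega) heq
    · exact (inj0 (i.val - j.val) j i v hj u hi (by omega) heq.symm).symm
  -- surjectivity
  have cover : ∀ (p : ℕ) (i : ℕ), i ≤ k → p ≤ o i + nn i - 1 →
      ∃ j : Fin (k+1), o j.val ≤ p ∧ p ≤ o j.val + nn j.val - 1 := by
    intro p i
    induction i with
    | zero =>
      intro _ hp
      exact ⟨⟨0, by omega⟩, Nat.zero_le p, hp⟩
    | succ i IH =>
      intro hik hp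
      rcases le_or_gt (o (i+1)) p with h | h
      · exact ⟨⟨i+1, by omega⟩, h, hp⟩
      · have h1 := osucc i
        have h2 := hnn1 i
        have h3 := hnn1 (i+1)
        exact IH (by omega) (by omega)
  have Fgsurj : ∀ p, p ≤ M → ∃ v, Fg v = p := by
    intro p hp
    obtain ⟨j, hj1, hj2⟩ := cover p k le_rfl (by omega)
    have hcj : nn j.val = n j := hnncoe j
    obtain ⟨x, hx⟩ := surj_of_inj (F j) (hFinj j) (hFlt j) (p - o j.val) (by
      show p - o j.val < n j
      have := hnn1 j.val
      omega)
    refine ⟨x.val, ?_⟩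
    rw [W j x.val x.2]
    have : (⟨x.val, x.2⟩ : (B j).verts) = x := rfl
    rw [this, hx]
    omega
  have hcard : Fintype.card V = M + 1 := by
    have hbij : Function.Bijective (fun v => (⟨Fg v, by have := hFgM v; omega⟩ : Fin (M+1))) := by
      constructor
      · intro u v h
        exact Fginj (by simpa [Fin.ext_iff] using h)
      · rintro ⟨m, hm⟩
        obtain ⟨v, hv⟩ := Fgsurj m (by omega)
        exact ⟨v, by simp [Fin.ext_iff, hv]⟩
    rw [Fintype.card_of_bijective hbij, Fintype.card_fin]
  rw [isStOneSided_iff]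
  have hFgs : Fg s = 0 := by
    have h0 : s ∈ (B 0).verts := by
      have hcc : c (0 : Fin (k+1)).castSucc = s := by rw [← hs]; congr 1
      rw [← hcc]; exact hmem1 0
    rw [W 0 s h0]
    have hsc : s = c (0 : Fin (k+1)).castSucc := by rw [← hs]; congr 1
    have : (⟨s, h0⟩ : (B 0).verts) = ⟨c (0 : Fin (k+1)).castSucc, hmem1 0⟩ :=
      Subtype.ext hsc
    rw [this, hFs 0]
    show offs nn 0 + 0 = 0
    rfl
  have hFgt : Fg t = M := by
    set kf : Fin (k+1) := ⟨k, by omega⟩ with hkf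
    have hcc : c kf.succ = t := by rw [← ht]; congr 1
    have h0 : t ∈ (B kf).verts := by rw [← hcc]; exact hmem2 kf
    rw [W kf t h0]
    have : (⟨t, h0⟩ : (B kf).verts) = ⟨c kf.succ, hmem2 kf⟩ := Subtype.ext hcc.symm
    rw [this, hFt kf]
    have hkv : (kf : ℕ) = k := rfl
    have h5 := hnncoe kf
    rw [hkv] at h5
    have := hn1 kf
    show o k + (n kf - 1) = M
    omega
  -- consecutive adjacency
  have direct : ∀ (i : Fin (k+1)) (u : V) (hu : u ∈ (B i).verts) (v : V),
      F i ⟨u, hu⟩ + 1 < n i → Fg u + 1 = Fg v → G.Adj u v := by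
    intro i u hu v hlt2 heq
    obtain ⟨x, hx⟩ := surj_of_inj (F i) (hFinj i) (hFlt i) (F i ⟨u, hu⟩ + 1) hlt2
    have hadjx : (B i).coe.Adj ⟨u, hu⟩ x := hFadj i ⟨u, hu⟩ x hx.symm
    have hgadj : G.Adj u x.val := ((B i).coe_adj _ _).mp hadjx |>.adj_sub
    have hFgx : Fg x.val = Fg v := by
      rw [W i x.val x.2, W i u hu] at *
      have : (⟨x.val, x.2⟩ : (B i).verts) = x := rfl
      rw [this, hx]
      omega
    rwa [Fginj hFgx] at hgadj
  have adjC : ∀ (m : ℕ) (i : Fin (k+1)) (u : V) (hu : u ∈ (B i).verts) (v : V),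
      k - i.val ≤ m → Fg u = o i.val + F i ⟨u, hu⟩ → Fg u + 1 = Fg v → G.Adj u v := by
    intro m
    induction m with
    | zero =>
      intro i u hu v hm hW heq
      rcases Nat.lt_or_ge (F i ⟨u, hu⟩ + 1) (n i) with h | h
      · exact direct i u hu v h heq
      · exfalso
        have h1 := hFltn i ⟨u, hu⟩
        have h2 : F i ⟨u, hu⟩ = n i - 1 := by omega
        have h3 : i.val = k := by omega
        have h4 := hFgM v
        have h5 := hnncoe i
        have h6 := hnn1 k
        rw [h3] at h5 hW
        omega
    | succ m IH =>
      intro i u hu v hm hW heq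
      rcases Nat.lt_or_ge (F i ⟨u, hu⟩ + 1) (n i) with h | h
      · exact direct i u hu v h heq
      · rcases Nat.lt_or_ge i.val k with hik | hik
        · have h1 := hFltn i ⟨u, hu⟩
          have h2 : F i ⟨u, hu⟩ = n i - 1 := by omega
          have huc : u = c i.succ := by
            have : F i ⟨u, hu⟩ = F i ⟨c i.succ, hmem2 i⟩ := by rw [h2, hFt i]
            exact congrArg Subtype.val (hFinj i this)
          set i' : Fin (k+1) := ⟨i.val + 1, by omega⟩ with hi'
          have hu' : u ∈ (B i').verts := by
            have hcc : c i'.castSucc = c i.succ := by congr 1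
            rw [huc, ← hcc]; exact hmem1 i'
          refine IH i' u hu' v (by simp [hi']; omega) (W i' u hu') heq
        · exfalso
          have h1 := hFltn i ⟨u, hu⟩
          have h2 : F i ⟨u, hu⟩ = n i - 1 := by omega
          have h3 : i.val = k := by omega
          have h4 := hFgM v
          have h5 := hnncoe i
          have h6 := hnn1 k
          rw [h3] at h5 hW
          omega
  -- block of an edge
  have blockOf : ∀ u v : V, G.Adj u v → ∃ i : Fin (k+1), (B i).Adj u v :=
    fun u v h => hedges u v h
  have uniq : ∀ (i j : Fin (k+1)) (u w : V), u ≠ w →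
      u ∈ (B i).verts → u ∈ (B j).verts → w ∈ (B i).verts → w ∈ (B j).verts → i = j := by
    have aux : ∀ (i j : Fin (k+1)) (u w : V), u ≠ w → i.val < j.val →
        u ∈ (B i).verts → u ∈ (B j).verts → w ∈ (B i).verts → w ∈ (B j).verts → False := by
      intro i j u w hne hij hui huj hwi hwj
      rcases Nat.lt_or_ge (i.val + 1) j.val with h | h
      · have := hfar i j h
        exact absurd (Set.mem_inter hui huj) (by rw [this]; exact Set.notMem_empty u)
      · have hj : j.val = i.val + 1 := by omega
        have hlt' : i.val + 1 < k + 1 := by omega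
        have hjeq : j = ⟨i.val + 1, hlt'⟩ := Fin.ext hj
        have hu : u = c i.succ := by
          have : u ∈ ({c i.succ} : Set V) := by
            rw [← hconsec i hlt']; exact Set.mem_inter hui (hjeq ▸ huj)
          exact this
        have hw : w = c i.succ := by
          have : w ∈ ({c i.succ} : Set V) := by
            rw [← hconsec i hlt']; exact Set.mem_inter hwi (hjeq ▸ hwj)
          exact this
        exact hne (hu.trans hw.symm)
    intro i j u w hne hui huj hwi hwj
    rcases lt_trichotomy i.val j.val with h | h | h
    · exact absurd (aux i j u w hne h hui huj hwi hwj) not_false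
    · exact Fin.ext h
    · exact absurd (aux j i u w hne h huj hui hwj hwi) not_false
  -- separation of intervals for edges in different blocks
  have edgesep : ∀ (i j : Fin (k+1)), i.val < j.val → ∀ (x y : V),
      x ∈ (B i).verts → y ∈ (B j).verts → Fg x ≤ Fg y := by
    intro i j hij x y hx hy
    have h1 := (hbound i x hx).2
    have h2 := (hbound j y hy).1
    have h3 := osep i.val j.val hij
    have h4 := hnncoe i
    have h5 := hn1 i
    omega
  -- assemble
  refine ⟨Fg, Fginj, ?_, by rw [hFgs], by rw [hFgt, hcard]; omega, ?_, ?_⟩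
  · intro v; have := hFgM v; omega
  · intro u v heq
    obtain ⟨i, hi⟩ := hcover u
    exact adjC (k - i.val) i u hi v le_rfl (W i u hi) heq
  · -- layout
    refine ⟨fun u v => ∃ (i : Fin (k+1)) (hu : u ∈ (B i).verts) (hv : v ∈ (B i).verts),
      TL i ⟨u, hu⟩ ⟨v, hv⟩, ?_, ?_, ?_⟩
    · intro u u' w w' hUadj hWadj h1 h2 ht1 ht2
      obtain ⟨i, hBi⟩ := blockOf u u' hUadj
      obtain ⟨j, hBj⟩ := blockOf w w' hWadj
      rcases lt_trichotomy i.val j.val with h | h | h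
      · rintro ⟨e1, e2, e3⟩
        have := edgesep i j h u' w hBi.snd_mem hBj.fst_mem
        omega
      · have hij : i = j := Fin.ext h
        subst hij
        have hWu := W i u hBi.fst_mem
        have hWu' := W i u' hBi.snd_mem
        have hWw := W i w hBj.fst_mem
        have hWw' := W i w' hBj.snd_mem
        have hc := hT1 i ⟨u, hBi.fst_mem⟩ ⟨u', hBi.snd_mem⟩ ⟨w, hBj.fst_mem⟩ ⟨w', hBj.snd_mem⟩
          (((B i).coe_adj _ _).mpr hBi) (((B i).coe_adj _ _).mpr hBj)
          (by omega) (by omega)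
          (fun htl => ht1 ⟨i, hBi.fst_mem, hBi.snd_mem, htl⟩)
          (fun htl => ht2 ⟨i, hBj.fst_mem, hBj.snd_mem, htl⟩)
        intro hcon
        exact hc ⟨by omega, by omega, by omega⟩
      · rintro ⟨e1, e2, e3⟩
        have := edgesep j i h w' u hBj.snd_mem hBi.fst_mem
        omega
    · intro u u' w w' hUadj hWadj h1 h2 ht1 ht2
      obtain ⟨i, hBi⟩ := blockOf u u' hUadj
      obtain ⟨j, hBj⟩ := blockOf w w' hWadj
      rcases lt_trichotomy i.val j.val with h | h | h
      · rintro ⟨e1, e2, e3⟩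
        have := edgesep i j h u' w hBi.snd_mem hBj.fst_mem
        omega
      · have hij : i = j := Fin.ext h
        subst hij
        have hWu := W i u hBi.fst_mem
        have hWu' := W i u' hBi.snd_mem
        have hWw := W i w hBj.fst_mem
        have hWw' := W i w' hBj.snd_mem
        have htl1 : TL i ⟨u, hBi.fst_mem⟩ ⟨u', hBi.snd_mem⟩ := by
          obtain ⟨i', hu1, hu2, htl⟩ := ht1
          have : i' = i := uniq i' i u u' hUadj.ne hu1 hBi.fst_mem hu2 hBi.snd_mem
          subst this
          exact htl
        have htl2 : TL i ⟨w, hBj.fst_mem⟩ ⟨w', hBj.snd_mem⟩ := by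
          obtain ⟨i', hu1, hu2, htl⟩ := ht2
          have : i' = i := uniq i' i w w' hWadj.ne hu1 hBj.fst_mem hu2 hBj.snd_mem
          subst this
          exact htl
        have hc := hT2 i ⟨u, hBi.fst_mem⟩ ⟨u', hBi.snd_mem⟩ ⟨w, hBj.fst_mem⟩ ⟨w', hBj.snd_mem⟩
          (((B i).coe_adj _ _).mpr hBi) (((B i).coe_adj _ _).mpr hBj)
          (by omega) (by omega) htl1 htl2
        intro hcon
        exact hc ⟨by omega, by omega, by omega⟩
      · rintro ⟨e1, e2, e3⟩
        have := edgesep j i h w' u hBj.snd_mem hBi.fst_mem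
        omega
    · intro u u' w w' hUadj hWadj h1 h2 ht1 ht2
      obtain ⟨i, hBi⟩ := blockOf u u' hUadj
      obtain ⟨j, hBj⟩ := blockOf w w' hWadj
      rcases lt_trichotomy i.val j.val with h | h | h
      · rintro ⟨e1, e2⟩
        have := edgesep i j h u' w hBi.snd_mem hBj.fst_mem
        omega
      · have hij : i = j := Fin.ext h
        subst hij
        have hWu := W i u hBi.fst_mem
        have hWu' := W i u' hBi.snd_mem
        have hWw := W i w hBj.fst_mem
        have hWw' := W i w' hBj.snd_mem
        have htl2 : TL i ⟨w, hBj.fst_mem⟩ ⟨w', hBj.snd_mem⟩ := by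
          obtain ⟨i', hu1, hu2, htl⟩ := ht2
          have : i' = i := uniq i' i w w' hWadj.ne hu1 hBj.fst_mem hu2 hBj.snd_mem
          subst this
          exact htl
        have hc := hT3 i ⟨u, hBi.fst_mem⟩ ⟨u', hBi.snd_mem⟩ ⟨w, hBj.fst_mem⟩ ⟨w', hBj.snd_mem⟩
          (((B i).coe_adj _ _).mpr hBi) (((B i).coe_adj _ _).mpr hBj)
          (by omega) (by omega)
          (fun htl => ht1 ⟨i, hBi.fst_mem, hBi.snd_mem, htl⟩) htl2
        intro hcon
        exact hc ⟨by omega, by omega⟩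
      · rintro ⟨e1, e2⟩
        have := edgesep j i h w u hBj.fst_mem hBi.fst_mem
        omega


end Main

/-- Let `G` be a graph whose blocks `B_1, …, B_{k+1}` are arranged in a path in the
block-cut tree, with cut vertices `c_1, …, c_k`, and set `c_0 = s`, `c_{k+1} = t`.
Then `G` is `st`-1-sided if and only if each block `B_i` is `c_{i−1}c_i`-1-sided. -/
theorem stOneSided_iff_blocks [Fintype V] (G : SimpleGraph V) (k : ℕ)
    (B : Fin (k + 1) → G.Subgraph) [∀ i, Fintype (B i).verts]
    (c : Fin (k + 2) → V) (s t : V)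
    (hs : c 0 = s) (ht : c (Fin.last (k + 1)) = t)
    (hmem1 : ∀ i : Fin (k + 1), c i.castSucc ∈ (B i).verts)
    (hmem2 : ∀ i : Fin (k + 1), c i.succ ∈ (B i).verts)
    (hcover : ∀ v : V, ∃ i, v ∈ (B i).verts)
    (hedges : ∀ u v : V, G.Adj u v → ∃ i, (B i).Adj u v)
    (hconsec : ∀ i : Fin (k + 1), ∀ h : i.val + 1 < k + 1,
      (B i).verts ∩ (B ⟨i.val + 1, h⟩).verts = {c i.succ})
    (hfar : ∀ i j : Fin (k + 1), i.val + 1 < j.val →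
      (B i).verts ∩ (B j).verts = ∅) :
    IsStOneSided G s t ↔
      ∀ i : Fin (k + 1),
        IsStOneSided (B i).coe ⟨c i.castSucc, hmem1 i⟩ ⟨c i.succ, hmem2 i⟩ := by
  constructor
  · exact forward_dir G k B c s t hs ht hmem1 hmem2 hcover hedges hconsec hfar
  · exact backward_dir G k B c s t hs ht hmem1 hmem2 hcover hedges hconsec hfar
end

section
/- In a plane graph, a strongly 1-sided Hamiltonian path starting with a given edge is unique if it exists: given a partial path v_1,…,v_i (i ≥ 2), the next vertex v_{i+1} is forced to be the other endpoint of the first edge, in counterclockwise order around v_i starting after (v_{i−1},v_i), whose other endpoint is not on the path. -/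
/-!
If two strongly 1-sided Hamiltonian paths agree up to `v_{i+1}` and then continue to `a ≠ b`,
then `b` is a neighbour of `v_{i+1}` not yet visited by the first path, so `b` lies between
`v_i` and `a` clockwise around `v_{i+1}`; symmetrically `a` lies between `v_i` and `b`,
contradicting the asymmetry of the rotation system. Hence the paths agree by induction on
the length of the common prefix.
-/

variable {V : Type*}

/-- `l` is a strongly 1-sided Hamiltonian path of the plane graph `G` whose
embedding is given by the rotation predicate `cw` (`cw v a b c` means that the
neighbours `a`, `b`, `c` appear in this clockwise order around `v`):
`l` is a Hamiltonian path and every edge from `l_i` (`i ≥ 1`) to a vertex `u`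
occurring later on the path leaves `l_i` on the left side, i.e. between the path
edges `(l_{i−1}, l_i)` and `(l_i, l_{i+1})` in clockwise order around `l_i`. -/
def OneSidedHamPath (G : SimpleGraph V) (cw : V → V → V → V → Prop)
    (l : List V) : Prop :=
  l.Nodup ∧ (∀ v : V, v ∈ l) ∧ l.Chain' G.Adj ∧
  ∀ i : ℕ, 1 ≤ i → ∀ h : i + 1 < l.length,
    ∀ u : V, G.Adj (l.get ⟨i, by omega⟩) u → u ∉ l.take (i + 2) →
      cw (l.get ⟨i, by omega⟩) (l.get ⟨i - 1, by omega⟩) u (l.get ⟨i + 1, h⟩)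

theorem List.Nodup.getElem_notMem_take {α : Type*} {l : List α} (hl : l.Nodup) {k : ℕ}
    (hk : k < l.length) : l[k] ∉ l.take k := by
  intro hmem
  obtain ⟨j, hj, hjk⟩ := List.mem_take_iff_getElem.mp hmem
  have := hl.getElem_inj_iff.mp hjk
  omega

theorem List.getElem_eq_of_take_eq {α : Type*} {l₁ l₂ : List α} {n j : ℕ}
    (h : l₁.take n = l₂.take n) (hj : j < n) (h₁ : j < l₁.length) (h₂ : j < l₂.length) :
    l₁[j] = l₂[j] := by
  simpa [List.getElem?_take, hj, h₁, h₂] using congrArg (·[j]?) h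

namespace OneSidedHamPath

variable {G : SimpleGraph V} {cw : V → V → V → V → Prop} {l l₁ l₂ : List V}

theorem perm (h₁ : OneSidedHamPath G cw l₁) (h₂ : OneSidedHamPath G cw l₂) : l₁.Perm l₂ :=
  (List.perm_ext_iff_of_nodup h₁.1 h₂.1).2 fun v => iff_of_true (h₁.2.1 v) (h₂.2.1 v)

theorem adj_getElem (h : OneSidedHamPath G cw l) {i : ℕ} (hi : i + 1 < l.length) :
    G.Adj l[i] l[i + 1] :=
  List.isChain_iff_getElem.mp h.2.2.1 i hi

theorem cw_getElem (h : OneSidedHamPath G cw l) {i : ℕ} (hi : i + 2 < l.length) {u : V}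
    (hadj : G.Adj l[i + 1] u) (hu : u ∉ l.take (i + 3)) : cw l[i + 1] l[i] u l[i + 2] :=
  h.2.2.2 (i + 1) le_add_self hi u hadj hu

theorem cw_of_take_eq (h₁ : OneSidedHamPath G cw l₁) (h₂ : OneSidedHamPath G cw l₂) {i : ℕ}
    (htake : l₁.take (i + 2) = l₂.take (i + 2)) (hi₁ : i + 2 < l₁.length)
    (hi₂ : i + 2 < l₂.length) (hne : l₁[i + 2] ≠ l₂[i + 2]) :
    cw l₁[i + 1] l₁[i] l₂[i + 2] l₁[i + 2] := by
  have hv : l₁[i + 1] = l₂[i + 1] := List.getElem_eq_of_take_eq htake (by omega) _ _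
  refine h₁.cw_getElem hi₁ (hv ▸ h₂.adj_getElem hi₂) ?_
  rw [List.take_add_one, List.getElem?_eq_getElem hi₁, htake]
  simpa [hne.symm] using h₂.1.getElem_notMem_take hi₂

theorem getElem?_eq_of_take_eq (hasym : ∀ v a b c, cw v a b c → ¬ cw v a c b)
    (h₁ : OneSidedHamPath G cw l₁) (h₂ : OneSidedHamPath G cw l₂) {i : ℕ}
    (htake : l₁.take (i + 2) = l₂.take (i + 2)) : l₁[i + 2]? = l₂[i + 2]? := by
  have hlen := (h₁.perm h₂).length_eq
  by_cases hi : i + 2 < l₁.length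
  · have hi₂ : i + 2 < l₂.length := hlen ▸ hi
    rw [List.getElem?_eq_getElem hi, List.getElem?_eq_getElem hi₂, Option.some_inj]
    by_contra hne
    have hright := cw_of_take_eq h₁ h₂ htake hi hi₂ hne
    have hleft := cw_of_take_eq h₂ h₁ htake.symm hi₂ hi (Ne.symm hne)
    have hv : l₂[i + 1] = l₁[i + 1] := List.getElem_eq_of_take_eq htake.symm (by omega) _ _
    have hprev : l₂[i] = l₁[i] := List.getElem_eq_of_take_eq htake.symm (by omega) _ _
    rw [hv, hprev] at hleft
    exact hasym _ _ _ _ hleft hright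
  · rw [List.getElem?_eq_none (by omega), List.getElem?_eq_none (by omega)]

end OneSidedHamPath

theorem oneSidedHamPath_unique_general (G : SimpleGraph V) (cw : V → V → V → V → Prop)
    (hasym : ∀ v a b c, cw v a b c → ¬ cw v a c b)
    (l₁ l₂ : List V)
    (h₁ : OneSidedHamPath G cw l₁) (h₂ : OneSidedHamPath G cw l₂)
    (hstart : l₁.take 2 = l₂.take 2) :
    l₁ = l₂ := by
  have htake : ∀ n, l₁.take (n + 2) = l₂.take (n + 2) := by
    intro n
    induction n with
    | zero => exact hstart
    | succ n ih =>
      rw [show n + 1 + 2 = n + 2 + 1 by omega, List.take_add_one (i := n + 2),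
        List.take_add_one (i := n + 2), ih, h₁.getElem?_eq_of_take_eq hasym h₂ ih]
  have hlen := (h₁.perm h₂).length_eq
  simpa [List.take_of_length_le, hlen] using htake l₁.length

/-- In a plane graph, a strongly 1-sided Hamiltonian path starting with a given
edge is unique if it exists: after the first edge, every subsequent vertex is
forced. Here `cw` is the clockwise rotation system of the plane embedding. -/
theorem oneSidedHamPath_unique (G : SimpleGraph V) (cw : V → V → V → V → Prop)
    (hcyc : ∀ v a b c, cw v a b c → cw v b c a)
    (hasym : ∀ v a b c, cw v a b c → ¬ cw v a c b)
    (htot : ∀ v a b c, G.Adj v a → G.Adj v b → G.Adj v c →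
      a ≠ b → b ≠ c → a ≠ c → cw v a b c ∨ cw v a c b)
    (htrans : ∀ v a b c d, cw v a b c → cw v a c d → cw v a b d)
    (l₁ l₂ : List V)
    (h₁ : OneSidedHamPath G cw l₁) (h₂ : OneSidedHamPath G cw l₂)
    (hstart : l₁.take 2 = l₂.take 2) :
    l₁ = l₂ :=
  oneSidedHamPath_unique_general G cw hasym l₁ l₂ h₁ h₂ hstart
end

section
/- There exists a 2-page rique layout of K_7, and K_7 admits no 1-page rique layout; hence sq(K_7) = 2. -/
variable {V : Type*}

/-!
Sorting any six vertices `v₀ ≺ ⋯ ≺ v₅` of a complete graph, the edges `v₀v₄`, `v₁v₃`, `v₂v₅`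
form the forbidden pattern, so one page never suffices once there are six vertices; pages
only help, so the rique-number is the least `k` with a `k`-page layout. For `K_7` in its
natural order, putting `14, 24, 25, 26, 36, 46` on the second page and the other edges on the
first avoids the pattern on both pages, which is checked exhaustively.
-/

open SimpleGraph

theorem RiqueLayout.mono {G : SimpleGraph V} {j k : ℕ} (h : RiqueLayout G j) (hjk : j ≤ k) :
    RiqueLayout G k := by
  obtain ⟨f, page, hf, hsymm, hfree⟩ := h
  refine ⟨f, fun u v => Fin.castLE hjk (page u v), hf,
    fun u v => congrArg (Fin.castLE hjk) (hsymm u v), ?_⟩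
  intro a a' b b' c c' ha hb hc hab hbc
  exact hfree a a' b b' c c' ha hb hc (Fin.castLE_inj.mp hab) (Fin.castLE_inj.mp hbc)

theorem riqueNumber_eq_succ {G : SimpleGraph V} {k : ℕ} (h : RiqueLayout G (k + 1))
    (h' : ¬ RiqueLayout G k) : riqueNumber G = k + 1 := by
  refine le_antisymm (Nat.sInf_le h) (le_csInf ⟨_, h⟩ fun j hj => ?_)
  by_contra! hlt
  exact h' (RiqueLayout.mono hj (Nat.lt_succ_iff.mp hlt))

theorem exists_strictMono_comp [Fintype V] {β : Type*} [LinearOrder β] {f : V → β}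
    (hf : Function.Injective f) {m : ℕ} (hm : m ≤ Fintype.card V) :
    ∃ v : Fin m → V, StrictMono (f ∘ v) := by
  let e := Fintype.equivFin V
  let σ := Tuple.sort (f ∘ e.symm)
  have hsorted : StrictMono (f ∘ e.symm ∘ σ) :=
    (Tuple.monotone_sort _).strictMono_of_injective
      ((hf.comp e.symm.injective).comp σ.injective)
  exact ⟨e.symm ∘ σ ∘ Fin.castLE hm, hsorted.comp (Fin.strictMono_castLE hm)⟩

theorem not_riqueLayout_one_completeGraph [Fintype V] (hV : 6 ≤ Fintype.card V) :
    ¬ RiqueLayout (completeGraph V) 1 := by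
  rintro ⟨f, page, hf, -, hfree⟩
  obtain ⟨v, hv⟩ := exists_strictMono_comp hf hV
  have hadj : ∀ i j : Fin 6, i < j → (completeGraph V).Adj (v i) (v j) := fun i j hij heq =>
    hv.injective.ne hij.ne (congrArg f heq)
  exact hfree (v 0) (v 4) (v 1) (v 3) (v 2) (v 5) (hadj 0 4 (by decide)) (hadj 1 3 (by decide))
    (hadj 2 5 (by decide)) (Subsingleton.elim _ _) (Subsingleton.elim _ _)
    ⟨hv (by decide), hv (by decide), hv (by decide), hv (by decide), hv (by decide)⟩

theorem riqueLayout_of_fin {n k : ℕ} (G : SimpleGraph (Fin n)) (page : Fin n → Fin n → Fin k)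
    (hsymm : ∀ u v, page u v = page v u)
    (hfree : ∀ a b, a < b → ∀ c, b < c → ∀ b', c < b' → ∀ a', b' < a' → ∀ c', b' < c' →
      ¬ (page a a' = page b b' ∧ page b b' = page c c')) :
    RiqueLayout G k := by
  refine ⟨Fin.val, page, Fin.val_injective, hsymm, ?_⟩
  rintro a a' b b' c c' - - - hab hbc ⟨h₁, h₂, h₃, h₄, h₅⟩
  exact hfree a b h₁ c h₂ b' h₃ a' h₄ c' h₅ ⟨hab, hbc⟩

def k7Page (u v : Fin 7) : Fin 2 :=
  if (min u v, max u v) ∈ [(1, 4), (2, 4), (2, 5), (2, 6), (3, 6), (4, 6)] then 1 else 0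

theorem riqueLayout_two_k7 : RiqueLayout (completeGraph (Fin 7)) 2 :=
  riqueLayout_of_fin _ k7Page (by decide) (by decide)

/-- `K_7` admits a 2-page rique layout but no 1-page rique layout;
hence its rique-number is 2. -/
theorem riqueNumber_K7 :
    RiqueLayout (SimpleGraph.completeGraph (Fin 7)) 2 ∧
    ¬ RiqueLayout (SimpleGraph.completeGraph (Fin 7)) 1 ∧
    riqueNumber (SimpleGraph.completeGraph (Fin 7)) = 2 := by
  have hno : ¬ RiqueLayout (completeGraph (Fin 7)) 1 :=
    not_riqueLayout_one_completeGraph (by simp)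
  exact ⟨riqueLayout_two_k7, hno, riqueNumber_eq_succ riqueLayout_two_k7 hno⟩
end
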